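/- arXiv:1507.02946 — 5 statements merged into one kernel-verified Lean document; each statement's English description precedes it below -/
import Mathlib

section
/- Fix n ≥ 1. Suppose that for all but finitely many primes p, every strong Keller map in ME_n(𝔽_p) is invertible over 𝔽_p. Then every F ∈ ME_n(ℤ) with affine part identity and det(Jac(F)) = 1 is invertible over ℤ. -/
open MvPolynomial

noncomputable section

/-- The total degree `|α|` of a multi-index `α`. -/
def mdeg {n : ℕ} (α : Fin n →₀ ℕ) : ℕ := α.sum fun _ e => e

/-- The determinant of the Jacobian matrix `(∂F_i/∂x_j)` of a polynomial endomorphism. -/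
def jacDet {n : ℕ} {R : Type*} [CommRing R] (F : Fin n → MvPolynomial (Fin n) R) :
    MvPolynomial (Fin n) R :=
  (Matrix.of fun i j => MvPolynomial.pderiv j (F i)).det

/-- `F` has degree at most `d`. -/
def DegLE {n : ℕ} {R : Type*} [CommRing R] (F : Fin n → MvPolynomial (Fin n) R) (d : ℕ) : Prop :=
  ∀ i, (F i).totalDegree ≤ d

/-- `F` has affine part the identity: `F_i = x_i + (terms of degree ≥ 2)`. -/
def AffinePartId {n : ℕ} {R : Type*} [CommRing R] (F : Fin n → MvPolynomial (Fin n) R) : Prop :=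
  ∀ (i : Fin n) (α : Fin n →₀ ℕ), mdeg α ≤ 1 →
    MvPolynomial.coeff α (F i) = MvPolynomial.coeff α (MvPolynomial.X i : MvPolynomial (Fin n) R)

/-- `F` is an invertible polynomial map: there is `G` with `F∘G = G∘F = id`. -/
def IsInvertible {n : ℕ} {R : Type*} [CommRing R] (F : Fin n → MvPolynomial (Fin n) R) : Prop :=
  ∃ G : Fin n → MvPolynomial (Fin n) R,
    (∀ i, MvPolynomial.bind₁ G (F i) = MvPolynomial.X i) ∧
    (∀ i, MvPolynomial.bind₁ F (G i) = MvPolynomial.X i)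

/-- Index type of the universal coefficients `c_{i,α}`, `1 ≤ i ≤ n`, `2 ≤ |α| ≤ d`. -/
abbrev Idx (n d : ℕ) : Type := Fin n × {α : Fin n →₀ ℕ // 2 ≤ mdeg α ∧ mdeg α ≤ d}

/-- The finite set of multi-indices `α` with `2 ≤ |α| ≤ d`. -/
def midxSet (n d : ℕ) : Finset (Fin n →₀ ℕ) :=
  (Finset.Iic (Finsupp.equivFunOnFinite.symm fun _ : Fin n => d)).filter
    fun α => 2 ≤ mdeg α ∧ mdeg α ≤ d

/-- The universal degree-`d` endomorphism with affine part identity, written over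
`C_{ℤ,d} = ℤ[c_{i,α}]`. -/
def univFZ (n d : ℕ) : Fin n → MvPolynomial (Fin n) (MvPolynomial (Idx n d) ℤ) :=
  fun i => MvPolynomial.X i +
    ∑ α ∈ (midxSet n d).attach,
      MvPolynomial.monomial (α : Fin n →₀ ℕ)
        (MvPolynomial.X (⟨i, ⟨α.1, by
          have h := α.2
          simp only [midxSet, Finset.mem_filter] at h
          exact h.2⟩⟩ : Idx n d))

/-- The coefficients `E_β ∈ C_{ℤ,d}` of `det(Jac(F[d])) − 1 = Σ_β E_β x^β`. -/
def Ecoef (n d : ℕ) (β : Fin n →₀ ℕ) : MvPolynomial (Idx n d) ℤ :=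
  MvPolynomial.coeff β (jacDet (univFZ n d) - 1)

/-- The inclusion `C_{ℤ,d} → C_{ℚ,d}`. -/
def toQ (n d : ℕ) : MvPolynomial (Idx n d) ℤ →+* MvPolynomial (Idx n d) ℚ :=
  MvPolynomial.map (Int.castRingHom ℚ)

/-- The ideal `I_ℚ^d ⊆ C_{ℚ,d}` generated by the coefficients `E_β`. -/
def Iqd (n d : ℕ) : Ideal (MvPolynomial (Idx n d) ℚ) :=
  Ideal.span (Set.range fun β : Fin n →₀ ℕ => toQ n d (Ecoef n d β))

/-- `J_ℤ^d := rad(I_ℚ^d) ∩ C_{ℤ,d}` as the contraction of the radical to `C_{ℤ,d}`. -/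
def Jzd (n d : ℕ) : Ideal (MvPolynomial (Idx n d) ℤ) :=
  Ideal.comap (toQ n d) (Iqd n d).radical

/-- `ψ_F : C_{ℤ,d} → R`, evaluating `c_{i,α}` at the coefficient of `x^α` in `F_i`. -/
def psi {n : ℕ} (d : ℕ) {R : Type*} [CommRing R] (F : Fin n → MvPolynomial (Fin n) R) :
    MvPolynomial (Idx n d) ℤ →+* R :=
  MvPolynomial.eval₂Hom (Int.castRingHom R) fun v => MvPolynomial.coeff v.2.1 (F v.1)

/-- `F` is a strong Keller map (w.r.t. degree bound `d`): `ψ_F` vanishes on `J_ℤ^d`. -/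
def IsSKE (n d : ℕ) {R : Type*} [CommRing R] (F : Fin n → MvPolynomial (Fin n) R) : Prop :=
  ∀ Q ∈ Jzd n d, psi d F Q = 0

/-- `F` is a strong Keller map: for some degree bound `d ≥ 2` of `F`,
`ψ_F` vanishes on `J_ℤ^d`. -/
def IsSKEAll (n : ℕ) {R : Type*} [CommRing R] (F : Fin n → MvPolynomial (Fin n) R) : Prop :=
  ∃ d, 2 ≤ d ∧ DegLE F d ∧ IsSKE n d F



namespace JC
open Finset

variable {n : ℕ} {R : Type*} [CommRing R]

lemma mdeg_def (β : Fin n →₀ ℕ) : mdeg β = ∑ j ∈ β.support, β j := rfl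

lemma mdeg_eq_sum_univ (β : Fin n →₀ ℕ) : mdeg β = ∑ j, β j :=
  Finsupp.sum_fintype _ _ (fun _ => rfl)

lemma entry_le_mdeg (β : Fin n →₀ ℕ) (j : Fin n) : β j ≤ mdeg β := by
  rw [mdeg_eq_sum_univ]
  exact Finset.single_le_sum (fun _ _ => Nat.zero_le _) (mem_univ j)

lemma mdeg_add (β γ : Fin n →₀ ℕ) : mdeg (β + γ) = mdeg β + mdeg γ :=
  Finsupp.sum_add_index' (fun _ => rfl) (fun _ _ _ => rfl)

lemma eq_zero_of_mdeg_eq_zero {β : Fin n →₀ ℕ} (h : mdeg β = 0) : β = 0 := by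
  ext j
  have := entry_le_mdeg β j
  simp only [Finsupp.coe_zero, Pi.zero_apply]
  omega

/-- all monomials of `P` have degree `≥ a`. -/
def LowDeg (a : ℕ) (P : MvPolynomial (Fin n) R) : Prop :=
  ∀ β, mdeg β < a → coeff β P = 0

lemma LowDeg.mono {a b : ℕ} {P : MvPolynomial (Fin n) R} (h : LowDeg b P) (hab : a ≤ b) :
    LowDeg a P := fun β hβ => h β (lt_of_lt_of_le hβ hab)

lemma lowDeg_zero (a : ℕ) : LowDeg a (0 : MvPolynomial (Fin n) R) := by
  intro β _; simp

lemma lowDeg_any (P : MvPolynomial (Fin n) R) : LowDeg 0 P :=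
  fun _ h => absurd h (Nat.not_lt_zero _)

lemma LowDeg.add {a : ℕ} {P Q : MvPolynomial (Fin n) R} (hP : LowDeg a P) (hQ : LowDeg a Q) :
    LowDeg a (P + Q) := fun β hβ => by rw [coeff_add, hP β hβ, hQ β hβ, add_zero]

lemma LowDeg.neg {a : ℕ} {P : MvPolynomial (Fin n) R} (hP : LowDeg a P) : LowDeg a (-P) :=
  fun β hβ => by rw [coeff_neg, hP β hβ, neg_zero]

lemma LowDeg.sub {a : ℕ} {P Q : MvPolynomial (Fin n) R} (hP : LowDeg a P) (hQ : LowDeg a Q) :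
    LowDeg a (P - Q) := by
  rw [sub_eq_add_neg]; exact hP.add hQ.neg

lemma lowDeg_sum {a : ℕ} {ι : Type*} (s : Finset ι) (f : ι → MvPolynomial (Fin n) R)
    (hf : ∀ x ∈ s, LowDeg a (f x)) : LowDeg a (∑ x ∈ s, f x) := by
  intro β hβ
  rw [MvPolynomial.coeff_sum]
  exact Finset.sum_eq_zero fun x hx => hf x hx β hβ

lemma LowDeg.mul {a b : ℕ} {P Q : MvPolynomial (Fin n) R} (hP : LowDeg a P) (hQ : LowDeg b Q) :
    LowDeg (a + b) (P * Q) := by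
  intro β hβ
  classical
  rw [coeff_mul]
  apply Finset.sum_eq_zero
  rintro ⟨γ, δ⟩ hm
  rw [Finset.HasAntidiagonal.mem_antidiagonal] at hm
  have hlt : mdeg γ + mdeg δ < a + b := by rw [← mdeg_add, hm]; exact hβ
  rcases Nat.lt_or_ge (mdeg γ) a with h | h
  · rw [hP γ h, zero_mul]
  · rw [hQ δ (by omega), mul_zero]

lemma lowDeg_X (i : Fin n) : LowDeg 1 (X i : MvPolynomial (Fin n) R) := by
  intro β hβ
  have hβ0 : β = 0 := eq_zero_of_mdeg_eq_zero (by omega)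
  subst hβ0
  simp [coeff_zero_X]

lemma lowDeg_multiset_prod {ι : Type*} (u : ι → MvPolynomial (Fin n) R)
    (hu : ∀ x, LowDeg 1 (u x)) (μ : Multiset ι) :
    LowDeg (Multiset.card μ) ((μ.map u).prod) := by
  induction μ using Multiset.induction_on with
  | empty => simpa using lowDeg_any _
  | cons a ν ih =>
      rw [Multiset.map_cons, Multiset.prod_cons, Multiset.card_cons]
      have h := (hu a).mul ih
      exact h.mono (by omega)

lemma lowDeg_multiset_prod_sub {ι : Type*} {m : ℕ} (u u' : ι → MvPolynomial (Fin n) R)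
    (hu : ∀ x, LowDeg 1 (u x)) (hu' : ∀ x, LowDeg 1 (u' x))
    (hd : ∀ x, LowDeg (m + 1) (u x - u' x)) (μ : Multiset ι) :
    LowDeg (Multiset.card μ + m) ((μ.map u).prod - (μ.map u').prod) := by
  induction μ using Multiset.induction_on with
  | empty => simpa using lowDeg_zero _
  | cons a ν ih =>
      rw [Multiset.map_cons, Multiset.prod_cons, Multiset.map_cons, Multiset.prod_cons,
        Multiset.card_cons]
      have key : u a * (ν.map u).prod - u' a * (ν.map u').prod
          = u a * ((ν.map u).prod - (ν.map u').prod) + (u a - u' a) * (ν.map u').prod := by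
        ring
      rw [key]
      have h1 := (hu a).mul ih
      have h2 := (hd a).mul (lowDeg_multiset_prod u' hu' ν)
      exact (h1.mono (by omega)).add (h2.mono (by omega))

lemma bind₁_eq_sum (G : Fin n → MvPolynomial (Fin n) R) (P : MvPolynomial (Fin n) R) :
    bind₁ G P = ∑ β ∈ P.support, C (coeff β P) * ∏ j, G j ^ β j := by
  rw [bind₁, aeval_def, eval₂_eq', algebraMap_eq]

lemma prod_pow_eq_multiset (G : Fin n → MvPolynomial (Fin n) R) (β : Fin n →₀ ℕ) :
    ∏ j, G j ^ β j = ((β.toMultiset).map G).prod := by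
  rw [Finsupp.toMultiset_map, Finsupp.prod_toMultiset,
    Finsupp.prod_mapDomain_index (fun _ => pow_zero _) (fun b m1 m2 => pow_add _ _ _),
    Finsupp.prod_pow]

lemma card_toMultiset_eq_mdeg (β : Fin n →₀ ℕ) : Multiset.card β.toMultiset = mdeg β := by
  rw [Finsupp.card_toMultiset]; rfl

lemma lowDeg_prod_pow (G : Fin n → MvPolynomial (Fin n) R) (hG : ∀ j, LowDeg 1 (G j))
    (β : Fin n →₀ ℕ) : LowDeg (mdeg β) (∏ j, G j ^ β j) := by
  rw [prod_pow_eq_multiset]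
  have := lowDeg_multiset_prod G hG β.toMultiset
  rwa [card_toMultiset_eq_mdeg] at this

lemma lowDeg_prod_pow_sub {m : ℕ} (G G' : Fin n → MvPolynomial (Fin n) R)
    (hG : ∀ j, LowDeg 1 (G j)) (hG' : ∀ j, LowDeg 1 (G' j))
    (hd : ∀ j, LowDeg (m + 1) (G j - G' j)) (β : Fin n →₀ ℕ) :
    LowDeg (mdeg β + m) (∏ j, G j ^ β j - ∏ j, G' j ^ β j) := by
  rw [prod_pow_eq_multiset, prod_pow_eq_multiset]
  have := lowDeg_multiset_prod_sub G G' hG hG' hd β.toMultiset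
  rwa [card_toMultiset_eq_mdeg] at this

lemma lowDeg_bind₁ (G : Fin n → MvPolynomial (Fin n) R) (hG : ∀ j, LowDeg 1 (G j))
    {P : MvPolynomial (Fin n) R} (hP : LowDeg 1 P) : LowDeg 1 (bind₁ G P) := by
  rw [bind₁_eq_sum]
  apply lowDeg_sum
  intro β hβ
  have h1 : 1 ≤ mdeg β := by
    by_contra h
    push_neg at h
    exact (mem_support_iff.mp hβ) (hP β (by omega))
  have := (lowDeg_any (C (coeff β P))).mul (lowDeg_prod_pow G hG β)
  exact this.mono (by omega)

lemma lowDeg_bind₁_sub {m : ℕ} (G G' : Fin n → MvPolynomial (Fin n) R)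
    (hG : ∀ j, LowDeg 1 (G j)) (hG' : ∀ j, LowDeg 1 (G' j))
    (hd : ∀ j, LowDeg (m + 1) (G j - G' j)) {P : MvPolynomial (Fin n) R} (hP : LowDeg 2 P) :
    LowDeg (m + 2) (bind₁ G P - bind₁ G' P) := by
  rw [bind₁_eq_sum, bind₁_eq_sum, ← Finset.sum_sub_distrib]
  apply lowDeg_sum
  intro β hβ
  have h2 : 2 ≤ mdeg β := by
    by_contra h
    push_neg at h
    exact (mem_support_iff.mp hβ) (hP β (by omega))
  have key : C (coeff β P) * ∏ j, G j ^ β j - C (coeff β P) * ∏ j, G' j ^ β j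
      = C (coeff β P) * (∏ j, G j ^ β j - ∏ j, G' j ^ β j) := by ring
  rw [key]
  have := (lowDeg_any (C (coeff β P))).mul (lowDeg_prod_pow_sub G G' hG hG' hd β)
  exact this.mono (by omega)


/-- The truncated-formal-inverse recursion. -/
def invSeq (F : Fin n → MvPolynomial (Fin n) R) : ℕ → Fin n → MvPolynomial (Fin n) R
  | 0 => X
  | m + 1 => fun i => X i + bind₁ (invSeq F m) (X i - F i)

variable {F : Fin n → MvPolynomial (Fin n) R}

lemma invSeq_lowDeg1 (hF : ∀ i, LowDeg 2 (X i - F i)) :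
    ∀ m i, LowDeg 1 (invSeq F m i)
  | 0, i => lowDeg_X i
  | m + 1, i => by
      show LowDeg 1 (X i + bind₁ (invSeq F m) (X i - F i))
      exact (lowDeg_X i).add
        (lowDeg_bind₁ _ (invSeq_lowDeg1 hF m) ((hF i).mono one_le_two))

lemma invSeq_adjacent (hF : ∀ i, LowDeg 2 (X i - F i)) :
    ∀ m i, LowDeg (m + 1) (invSeq F (m + 1) i - invSeq F m i)
  | 0, i => by
      show LowDeg 1 (X i + bind₁ (invSeq F 0) (X i - F i) - invSeq F 0 i)
      have : X i + bind₁ (invSeq F 0) (X i - F i) - invSeq F 0 i = X i - F i := by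
        show X i + bind₁ X (X i - F i) - X i = X i - F i
        rw [bind₁_X_left]
        simp
      rw [this]
      exact (hF i).mono one_le_two
  | m + 1, i => by
      have key : invSeq F (m + 2) i - invSeq F (m + 1) i
          = bind₁ (invSeq F (m + 1)) (X i - F i) - bind₁ (invSeq F m) (X i - F i) := by
        show X i + bind₁ (invSeq F (m + 1)) (X i - F i)
            - (X i + bind₁ (invSeq F m) (X i - F i)) = _
        ring
      rw [key]
      have := lowDeg_bind₁_sub (invSeq F (m + 1)) (invSeq F m)
        (invSeq_lowDeg1 hF (m + 1)) (invSeq_lowDeg1 hF m)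
        (invSeq_adjacent hF m) (hF i)
      exact this.mono (by omega)

lemma invSeq_inverts (hF : ∀ i, LowDeg 2 (X i - F i)) :
    ∀ m i, LowDeg (m + 1) (bind₁ (invSeq F m) (F i) - X i)
  | 0, i => by
      have : bind₁ (invSeq F 0) (F i) - X i = -(X i - F i) := by
        show bind₁ X (F i) - X i = _
        rw [bind₁_X_left]
        simp
      rw [this]
      exact ((hF i).mono one_le_two).neg
  | m + 1, i => by
      have key : bind₁ (invSeq F (m + 1)) (F i) - X i
          = bind₁ (invSeq F m) (X i - F i) - bind₁ (invSeq F (m + 1)) (X i - F i) := by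
        have h1 : bind₁ (invSeq F (m + 1)) (X i - F i)
            = invSeq F (m + 1) i - bind₁ (invSeq F (m + 1)) (F i) := by
          rw [map_sub, bind₁_X_right]
        have h2 : invSeq F (m + 1) i = X i + bind₁ (invSeq F m) (X i - F i) := rfl
        rw [h1, h2]
        ring
      rw [key]
      have := lowDeg_bind₁_sub (invSeq F m) (invSeq F (m + 1))
        (invSeq_lowDeg1 hF m) (invSeq_lowDeg1 hF (m + 1))
        (fun j => by
          have h := (invSeq_adjacent hF m j).neg
          rwa [neg_sub] at h) (hF i)
      exact this.mono (by omega)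

lemma invSeq_unique {M : ℕ} (hF : ∀ i, LowDeg 2 (X i - F i))
    (G G' : Fin n → MvPolynomial (Fin n) R)
    (hG1 : ∀ j, LowDeg 1 (G j)) (hG1' : ∀ j, LowDeg 1 (G' j))
    (hG : ∀ i, LowDeg (M + 1) (bind₁ G (F i) - X i))
    (hG' : ∀ i, LowDeg (M + 1) (bind₁ G' (F i) - X i)) :
    ∀ i, LowDeg (M + 1) (G i - G' i) := by
  suffices h : ∀ t, t ≤ M → ∀ i, LowDeg (t + 1) (G i - G' i) from fun i => h M le_rfl i
  intro t
  induction t with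
  | zero =>
      intro _ i β hβ
      have hβ0 : β = 0 := eq_zero_of_mdeg_eq_zero (by omega)
      subst hβ0
      rw [coeff_sub, hG1 i 0 (by simp [mdeg]), hG1' i 0 (by simp [mdeg]), sub_zero]
  | succ t ih =>
      intro ht i
      have hprev : ∀ j, LowDeg (t + 1) (G j - G' j) := fun j => ih (by omega) j
      have key : G i - G' i = ((bind₁ G (F i) - X i) - (bind₁ G' (F i) - X i))
          + (bind₁ G (X i - F i) - bind₁ G' (X i - F i)) := by
        rw [map_sub, map_sub, bind₁_X_right, bind₁_X_right]
        ring
      rw [key]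
      have h1 := ((hG i).sub (hG' i)).mono (show t + 1 + 1 ≤ M + 1 by omega)
      have h2 := (lowDeg_bind₁_sub G G' hG1 hG1' hprev (hF i)).mono
        (show t + 1 + 1 ≤ t + 2 by omega)
      exact h1.add h2

lemma map_invSeq {S : Type*} [CommRing S] (φ : R →+* S) (F : Fin n → MvPolynomial (Fin n) R) :
    ∀ m i, MvPolynomial.map φ (invSeq F m i)
      = invSeq (fun j => MvPolynomial.map φ (F j)) m i
  | 0, i => map_X φ i
  | m + 1, i => by
      show MvPolynomial.map φ (X i + bind₁ (invSeq F m) (X i - F i)) = _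
      rw [map_add, map_X, map_bind₁, map_sub, map_X]
      have hfun : (fun j => MvPolynomial.map φ (invSeq F m j))
          = invSeq (fun j => MvPolynomial.map φ (F j)) m := funext (map_invSeq φ F m)
      rw [hfun]
      rfl

/-- truncation to degrees ≤ D -/
def truncD (D : ℕ) (P : MvPolynomial (Fin n) R) : MvPolynomial (Fin n) R :=
  ∑ β ∈ P.support.filter (fun β => mdeg β ≤ D), monomial β (coeff β P)

lemma coeff_truncD (D : ℕ) (P : MvPolynomial (Fin n) R) (β : Fin n →₀ ℕ) :
    coeff β (truncD D P) = if mdeg β ≤ D then coeff β P else 0 := by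
  classical
  rw [truncD, MvPolynomial.coeff_sum]
  simp only [coeff_monomial]
  rw [Finset.sum_ite_eq' (P.support.filter (fun β => mdeg β ≤ D)) β (fun γ => coeff γ P)]
  by_cases h : mdeg β ≤ D
  · by_cases h0 : coeff β P = 0
    · simp [h, h0]
    · simp [Finset.mem_filter, mem_support_iff, h, h0]
  · simp [Finset.mem_filter, h]


lemma digits_lt {b : ℕ} (hb : 0 < b) :
    ∀ {s : ℕ} (f : Fin s → ℕ), (∀ j, f j < b) → ∑ j, f j * b ^ (j : ℕ) < b ^ s := by
  intro s
  induction s with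
  | zero => intro f _; simpa using Nat.zero_lt_one
  | succ s ih =>
      intro f hf
      rw [Fin.sum_univ_succ]
      have hrw : ∀ j : Fin s, f j.succ * b ^ ((j.succ : ℕ)) = (f j.succ * b ^ (j : ℕ)) * b := by
        intro j
        rw [Fin.val_succ, pow_succ]
        ring
      rw [Finset.sum_congr rfl (fun j _ => hrw j), ← Finset.sum_mul]
      have hS : (∑ j : Fin s, f j.succ * b ^ (j : ℕ)) < b ^ s := by
        simpa using ih (fun j => f j.succ) (fun j => hf j.succ)
      have h0 := hf 0
      have h1 : (∑ j : Fin s, f j.succ * b ^ (j : ℕ)) * b + b ≤ b ^ s * b := by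
        have := Nat.mul_le_mul_right b (Nat.succ_le_of_lt hS)
        rw [Nat.succ_mul] at this
        omega
      have : b ^ (s + 1) = b ^ s * b := pow_succ b s
      simp only [Fin.val_zero, pow_zero, mul_one]
      omega

lemma digits_inj {b : ℕ} : ∀ {s : ℕ} {f g : Fin s → ℕ}, (∀ j, f j < b) → (∀ j, g j < b) →
    (∑ j, f j * b ^ (j : ℕ)) = (∑ j, g j * b ^ (j : ℕ)) → f = g := by
  intro s
  induction s with
  | zero => intro f g _ _ _; funext j; exact j.elim0
  | succ s ih =>
      intro f g hf hg h
      have hb : 0 < b := Nat.pos_of_ne_zero (by rintro rfl; exact Nat.not_lt_zero _ (hf 0))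
      have hrw : ∀ (u : Fin (s+1) → ℕ),
          ∑ j, u j * b ^ (j : ℕ) = u 0 + (∑ j : Fin s, u j.succ * b ^ (j : ℕ)) * b := by
        intro u
        rw [Fin.sum_univ_succ]
        rw [Finset.sum_mul]
        congr 1
        · simp
        · apply Finset.sum_congr rfl
          intro j _
          rw [Fin.val_succ, pow_succ]
          ring
      rw [hrw f, hrw g] at h
      have hf0 : f 0 = g 0 := by
        have h1 : (f 0 + (∑ j : Fin s, f j.succ * b ^ (j : ℕ)) * b) % b = f 0 := by
          rw [Nat.add_mul_mod_self_right, Nat.mod_eq_of_lt (hf 0)]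
        have h2 : (g 0 + (∑ j : Fin s, g j.succ * b ^ (j : ℕ)) * b) % b = g 0 := by
          rw [Nat.add_mul_mod_self_right, Nat.mod_eq_of_lt (hg 0)]
        rw [← h1, ← h2, h]
      have hsum : (∑ j : Fin s, f j.succ * b ^ (j : ℕ)) = ∑ j : Fin s, g j.succ * b ^ (j : ℕ) :=
        Nat.eq_of_mul_eq_mul_right hb (by omega)
      have htail := ih (fun j => hf j.succ) (fun j => hg j.succ) hsum
      funext j
      induction j using Fin.cases with
      | zero => exact hf0
      | succ j => exact congrFun htail j

variable {k : Type*} [CommRing k]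

def wt (e : Fin n → ℕ) (β : Fin n →₀ ℕ) : ℕ := ∑ j, e j * β j

def toOne (e : Fin n → ℕ) : MvPolynomial (Fin n) k →+* Polynomial k :=
  eval₂Hom Polynomial.C (fun j => Polynomial.X ^ e j)

lemma toOne_apply (e : Fin n → ℕ) (P : MvPolynomial (Fin n) k) :
    toOne e P = ∑ β ∈ P.support, Polynomial.C (coeff β P) * Polynomial.X ^ wt e β := by
  show eval₂ Polynomial.C _ P = _
  rw [eval₂_eq']
  apply Finset.sum_congr rfl
  intro β _
  congr 1
  rw [wt, ← Finset.prod_pow_eq_pow_sum]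
  apply Finset.prod_congr rfl
  intro j _
  rw [← pow_mul]

lemma natDegree_toOne_le (e : Fin n → ℕ) (E : ℕ) (hE : ∀ j, e j ≤ E)
    (P : MvPolynomial (Fin n) k) : (toOne e P).natDegree ≤ E * P.totalDegree := by
  rw [toOne_apply]
  apply Polynomial.natDegree_sum_le_of_forall_le
  intro β hβ
  refine le_trans (Polynomial.natDegree_C_mul_le _ _) ?_
  refine le_trans (Polynomial.natDegree_X_pow_le _) ?_
  have h1 : wt e β ≤ E * mdeg β := by
    rw [wt, mdeg_eq_sum_univ, Finset.mul_sum]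
    exact Finset.sum_le_sum fun j _ => Nat.mul_le_mul_right _ (hE j)
  exact le_trans h1 (Nat.mul_le_mul_left _ (le_totalDegree hβ))

lemma coeff_toOne (e : Fin n → ℕ) (P : MvPolynomial (Fin n) k) (β₀ : Fin n →₀ ℕ)
    (hinj : ∀ β ∈ P.support, wt e β = wt e β₀ → β = β₀) :
    (toOne e P).coeff (wt e β₀) = coeff β₀ P := by
  classical
  rw [toOne_apply, Polynomial.finset_sum_coeff]
  by_cases hmem : β₀ ∈ P.support
  · rw [Finset.sum_eq_single β₀]
    · simp [Polynomial.coeff_C_mul, Polynomial.coeff_X_pow]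
    · intro β hβ hne
      simp only [Polynomial.coeff_C_mul, Polynomial.coeff_X_pow]
      rw [if_neg, mul_zero]
      exact fun h => hne (hinj β hβ h.symm)
    · intro h; exact absurd hmem h
  · have h0 : coeff β₀ P = 0 := notMem_support_iff.mp hmem
    rw [h0]
    apply Finset.sum_eq_zero
    intro β hβ
    simp only [Polynomial.coeff_C_mul, Polynomial.coeff_X_pow]
    rw [if_neg, mul_zero]
    intro h
    exact hmem ((hinj β hβ h.symm) ▸ hβ)

lemma totalDegree_le_of_annihilated {k : Type*} [Field k] {N c : ℕ}
    (g : MvPolynomial (Fin n) k) (r : Fin N → MvPolynomial (Fin n) k)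
    (hrc : ∀ a, (r a).totalDegree ≤ c) (hne : ∃ a, r a ≠ 0)
    (hrel : ∑ a, r a * g ^ (a : ℕ) = 0) : g.totalDegree ≤ c := by
  classical
  by_contra hgt
  push_neg at hgt
  set m := g.totalDegree with hm
  have hg0 : g ≠ 0 := by
    intro h; rw [h, totalDegree_zero] at hm; omega
  set b := m + 1 with hb
  have hbpos : 0 < b := Nat.succ_pos _
  set W := b ^ (n + 1) * (c + 1) with hW
  have hWpos : 0 < W := by positivity
  set e := fun j : Fin n => W + b ^ (j : ℕ) with he
  set E := W + b ^ (n + 1) with hE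
  have heE : ∀ j, e j ≤ E :=
    fun j => Nat.add_le_add_left (Nat.pow_le_pow_right hbpos (by omega)) _
  -- injectivity of the weight on entrywise-small multi-indices
  have hsplit : ∀ δ : Fin n →₀ ℕ, wt e δ = W * mdeg δ + ∑ j, δ j * b ^ (j : ℕ) := by
    intro δ
    rw [wt, mdeg_eq_sum_univ, Finset.mul_sum, ← Finset.sum_add_distrib]
    apply Finset.sum_congr rfl
    intro j _
    show (W + b ^ (j : ℕ)) * δ j = W * δ j + δ j * b ^ (j : ℕ)
    ring
  have hv : ∀ δ : Fin n →₀ ℕ, (∀ j, δ j < b) → ∑ j, δ j * b ^ (j : ℕ) < W := by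
    intro δ hδ
    refine lt_of_lt_of_le (digits_lt hbpos (fun j => δ j) hδ) ?_
    calc b ^ n ≤ b ^ (n + 1) := Nat.pow_le_pow_right hbpos (by omega)
    _ ≤ W := by rw [hW]; exact Nat.le_mul_of_pos_right _ (by omega)
  have hwt : ∀ β γ : Fin n →₀ ℕ, (∀ j, β j < b) → (∀ j, γ j < b) →
      wt e β = wt e γ → β = γ := by
    intro β γ hβ hγ hw
    rw [hsplit β, hsplit γ] at hw
    have hvβ := hv β hβ
    have hvγ := hv γ hγ
    have hdiveq : ∀ x v : ℕ, v < W → (W * x + v) / W = x := by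
      intro x v hlt
      rw [Nat.mul_add_div hWpos, Nat.div_eq_of_lt hlt, add_zero]
    have hmd : mdeg β = mdeg γ := by
      rw [← hdiveq (mdeg β) _ hvβ, hw, hdiveq (mdeg γ) _ hvγ]
    rw [hmd] at hw
    have hdig : (fun j : Fin n => β j) = fun j => γ j := digits_inj hβ hγ (by omega)
    ext j
    exact congrFun hdig j
  -- lower bound : W * m ≤ natDegree (toOne e g), and toOne e g ≠ 0
  set φg := toOne (k := k) e g with hφg
  have hsupp : g.support.Nonempty := support_nonempty.mpr hg0
  obtain ⟨β₀, hβ₀mem, hβ₀deg⟩ : ∃ β₀ ∈ g.support, mdeg β₀ = m := by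
    obtain ⟨β₀, h1, h2⟩ := Finset.exists_mem_eq_sup g.support hsupp
      (fun s => s.sum fun _ e => e)
    exact ⟨β₀, h1, h2.symm⟩
  have hentry : ∀ β ∈ g.support, ∀ j, β j < b := by
    intro β hβ j
    have := (entry_le_mdeg β j).trans (le_totalDegree hβ)
    omega
  have hcoeffg : φg.coeff (wt e β₀) = coeff β₀ g :=
    coeff_toOne e g β₀ (fun β hβ h => hwt β β₀ (hentry β hβ) (hentry β₀ hβ₀mem) h)
  have hφg0 : φg ≠ 0 := by
    intro h
    exact (mem_support_iff.mp hβ₀mem) (by rw [← hcoeffg, h, Polynomial.coeff_zero])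
  have hlow : W * m ≤ φg.natDegree := by
    refine le_trans ?_ (Polynomial.le_natDegree_of_ne_zero
      (by rw [hcoeffg]; exact mem_support_iff.mp hβ₀mem))
    rw [wt]
    calc W * m = ∑ j, W * β₀ j := by rw [← Finset.mul_sum, ← mdeg_eq_sum_univ, hβ₀deg]
    _ ≤ ∑ j, e j * β₀ j :=
        Finset.sum_le_sum fun j _ => Nat.mul_le_mul_right _ (Nat.le_add_right _ _)
  -- the top index K
  set S := Finset.univ.filter (fun a : Fin N => r a ≠ 0) with hS
  have hSne : S.Nonempty := by
    obtain ⟨a, ha⟩ := hne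
    exact ⟨a, by simp [hS, ha]⟩
  set K := S.max' hSne with hK
  have hKS : K ∈ S := S.max'_mem hSne
  have hrK : r K ≠ 0 := by
    have := hKS
    rw [hS, Finset.mem_filter] at this
    exact this.2
  have hφr0 : ∀ a, r a ≠ 0 → toOne (k := k) e (r a) ≠ 0 := by
    intro a ha
    have hent : ∀ β ∈ (r a).support, ∀ j, β j < b := by
      intro β hβ j
      have := (entry_le_mdeg β j).trans ((le_totalDegree hβ).trans (hrc a))
      omega
    obtain ⟨β₁, hβ₁⟩ := support_nonempty.mpr ha
    have hc := coeff_toOne e (r a) β₁ (fun β hβ h => hwt β β₁ (hent β hβ) (hent β₁ hβ₁) h)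
    intro h
    exact (mem_support_iff.mp hβ₁) (by rw [← hc, h, Polynomial.coeff_zero])
  -- restrict the relation to S and split off K
  have hrel' : ∑ a ∈ S, r a * g ^ (a : ℕ) = 0 := by
    rw [← hrel, hS]
    apply Finset.sum_filter_of_ne
    intro a _ hne0 h0
    rw [h0, zero_mul] at hne0
    exact hne0 rfl
  have hsplit2 : r K * g ^ (K : ℕ) = - ∑ a ∈ S.erase K, r a * g ^ (a : ℕ) := by
    have h := Finset.add_sum_erase S (fun a => r a * g ^ (a : ℕ)) hKS
    rw [hrel'] at h
    exact eq_neg_of_add_eq_zero_left (by simpa using h)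
  by_cases hcase : S.erase K = ∅
  · rw [hcase] at hsplit2
    simp only [Finset.sum_empty, neg_zero] at hsplit2
    rcases mul_eq_zero.mp hsplit2 with h | h
    · exact hrK h
    · exact hg0 (pow_eq_zero_iff'.mp h).1
  · have hcaseNe : (S.erase K).Nonempty := Finset.nonempty_of_ne_empty hcase
    have hK1 : 1 ≤ (K : ℕ) := by
      obtain ⟨a, ha⟩ := hcaseNe
      have h1 := Finset.mem_of_mem_erase ha
      have h2 := Finset.ne_of_mem_erase ha
      have h3 := S.le_max' a h1
      rw [← hK] at h3
      have : a < K := lt_of_le_of_ne h3 h2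
      omega
    set Dg := φg.natDegree with hDg
    have hEq : toOne (k := k) e (r K) * φg ^ (K : ℕ)
        = - ∑ a ∈ S.erase K, toOne (k := k) e (r a) * φg ^ (a : ℕ) := by
      have := congrArg (toOne (k := k) e) hsplit2
      rw [map_mul, map_pow, map_neg, map_sum] at this
      simpa [map_mul, map_pow] using this
    have hineq : (toOne (k := k) e (r K)).natDegree + (K : ℕ) * Dg
        ≤ E * c + ((K : ℕ) - 1) * Dg := by
      have hLHS : (toOne (k := k) e (r K) * φg ^ (K : ℕ)).natDegree
          = (toOne (k := k) e (r K)).natDegree + (K : ℕ) * Dg := by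
        rw [Polynomial.natDegree_mul (hφr0 K hrK) (pow_ne_zero _ hφg0),
          Polynomial.natDegree_pow]
      rw [← hLHS, hEq, Polynomial.natDegree_neg]
      apply Polynomial.natDegree_sum_le_of_forall_le
      intro a ha
      have haK : (a : ℕ) < (K : ℕ) := by
        have h1 := Finset.mem_of_mem_erase ha
        have h2 := Finset.ne_of_mem_erase ha
        have h3 := S.le_max' a h1
        rw [← hK] at h3
        have h4 : a < K := lt_of_le_of_ne h3 h2
        exact h4
      refine le_trans Polynomial.natDegree_mul_le ?_
      have hb1 : (toOne (k := k) e (r a)).natDegree ≤ E * c :=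
        le_trans (natDegree_toOne_le e E heE (r a)) (Nat.mul_le_mul_left _ (hrc a))
      have hb2 : (φg ^ (a : ℕ)).natDegree ≤ ((K : ℕ) - 1) * Dg := by
        rw [Polynomial.natDegree_pow]
        exact Nat.mul_le_mul_right _ (by omega)
      omega
    have hDE : Dg ≤ E * c := by
      have hexp : (K : ℕ) * Dg = ((K : ℕ) - 1) * Dg + Dg := by
        obtain ⟨t, ht⟩ := Nat.exists_eq_add_of_le hK1
        rw [ht, Nat.add_sub_cancel_left]
        ring
      omega
    -- final contradiction
    have hfinal : W * m ≤ E * c := le_trans hlow hDE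
    rw [hW, hE] at hfinal
    have hEe : b ^ (n+1) * (c+1) + b ^ (n+1) = b ^ (n+1) * (c+2) := by ring
    rw [hEe] at hfinal
    have hbp : 0 < b ^ (n + 1) := pow_pos hbpos _
    have h2 : (c + 1) * m ≤ (c + 2) * c := by
      have h3 : b ^ (n+1) * ((c+1) * m) ≤ b ^ (n+1) * ((c+2) * c) := by
        calc b ^ (n+1) * ((c+1) * m) = b ^ (n+1) * (c+1) * m := by ring
        _ ≤ b ^ (n+1) * (c+2) * c := hfinal
        _ = b ^ (n+1) * ((c+2) * c) := by ring
      exact Nat.le_of_mul_le_mul_left h3 hbp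
    nlinarith [hgt, h2]


lemma inverse_degree_bound {k : Type*} [Field k] {d : ℕ} (hn : 1 ≤ n) (hd : 2 ≤ d)
    (F G : Fin n → MvPolynomial (Fin n) k) (hdeg : ∀ i', (F i').totalDegree ≤ d)
    (h1 : ∀ i', bind₁ G (F i') = X i') (i : Fin n) :
    (G i).totalDegree ≤ n * (2 * d * n) ^ n := by
  classical
  set v := (2 * d * n) ^ n with hv
  have hvpos : 0 < v := by positivity
  set A := d * n * v with hA
  have hApos : 0 < A := by positivity
  -- monomials to substitute
  set Mo : (Fin A × (Fin n → Fin v)) → MvPolynomial (Fin n) k :=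
    fun u => X i ^ (u.1 : ℕ) * ∏ j, F j ^ ((u.2 j : ℕ)) with hMo
  set Qm : ((Fin A × (Fin n → Fin v)) → k) →ₗ[k] MvPolynomial (Fin n) k :=
    ∑ u : Fin A × (Fin n → Fin v), LinearMap.smulRight (LinearMap.proj u) (Mo u) with hQmdef
  have hQm : ∀ cc : (Fin A × (Fin n → Fin v)) → k,
      Qm cc = ∑ u : Fin A × (Fin n → Fin v), cc u • Mo u := by
    intro cc
    rw [hQmdef]
    simp [LinearMap.sum_apply, LinearMap.smulRight_apply, LinearMap.proj_apply]
  -- coefficient linear functional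
  set coeffL : (Fin n →₀ ℕ) → MvPolynomial (Fin n) k →ₗ[k] k := fun β =>
    { toFun := fun P => coeff β P
      map_add' := fun P Q => coeff_add β P Q
      map_smul' := fun r P => coeff_smul β r P } with hcoeffL
  set toF : (Fin n → Fin (2 * d * n * v)) → (Fin n →₀ ℕ) :=
    fun β => Finsupp.equivFunOnFinite.symm (fun j => (β j : ℕ)) with htoF
  set Θ : ((Fin A × (Fin n → Fin v)) → k) →ₗ[k] ((Fin n → Fin (2 * d * n * v)) → k) :=
    LinearMap.pi (fun β => (coeffL (toF β)).comp Qm) with hΘ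
  -- cardinality comparison
  have hcard : Fintype.card (Fin n → Fin (2 * d * n * v))
      < Fintype.card (Fin A × (Fin n → Fin v)) := by
    rw [Fintype.card_prod, Fintype.card_fun, Fintype.card_fun]
    simp only [Fintype.card_fin]
    have e1 : (2 * d * n * v) ^ n = v * v ^ n := by
      rw [mul_pow, ← hv]
    rw [e1, hA]
    have h2 : 2 ≤ d * n := by nlinarith
    have hp : 0 < v * v ^ n := by positivity
    calc v * v ^ n < 2 * (v * v ^ n) := by omega
    _ ≤ (d * n) * (v * v ^ n) := Nat.mul_le_mul_right _ h2
    _ = d * n * v * v ^ n := by ring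
  have hninj : ¬ Function.Injective Θ := by
    intro hinj
    have hle := LinearMap.finrank_le_finrank_of_injective hinj
    rw [Module.finrank_pi, Module.finrank_pi] at hle
    omega
  obtain ⟨c1, c2, heq12, hne12⟩ := Function.not_injective_iff.mp hninj
  set cc := c1 - c2 with hccdef
  have hcc0 : cc ≠ 0 := sub_ne_zero.mpr hne12
  have hΘcc : Θ cc = 0 := by rw [hccdef, map_sub, heq12, sub_self]
  -- degree bound on the monomials
  have hMod : ∀ u : Fin A × (Fin n → Fin v),
      (Mo u).totalDegree ≤ (A - 1) + d * (n * (v - 1)) := by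
    intro u
    rw [hMo]
    refine le_trans (totalDegree_mul _ _) (Nat.add_le_add ?_ ?_)
    · refine le_trans (totalDegree_pow _ _) ?_
      rw [totalDegree_X]
      have := u.1.isLt
      omega
    · refine le_trans (totalDegree_finset_prod _ _) ?_
      calc ∑ j, (F j ^ (u.2 j : ℕ)).totalDegree
          ≤ ∑ j, (u.2 j : ℕ) * d := Finset.sum_le_sum fun j _ =>
            le_trans (totalDegree_pow _ _) (Nat.mul_le_mul_left _ (hdeg j))
      _ ≤ ∑ _j : Fin n, (v - 1) * d := Finset.sum_le_sum fun j _ => by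
            have := (u.2 j).isLt
            exact Nat.mul_le_mul_right _ (by omega)
      _ = n * ((v - 1) * d) := by
            rw [Finset.sum_const, card_univ, Fintype.card_fin, smul_eq_mul]
      _ = d * (n * (v - 1)) := by ring
  -- Qm cc is zero
  have hQcc : Qm cc = 0 := by
    apply MvPolynomial.ext
    intro β
    rw [coeff_zero]
    by_cases hbox : ∀ j, β j < 2 * d * n * v
    · have hco := congrFun hΘcc (fun j => (⟨β j, hbox j⟩ : Fin (2 * d * n * v)))
      have htoFβ : toF (fun j => (⟨β j, hbox j⟩ : Fin (2 * d * n * v))) = β := by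
        rw [htoF]
        ext j
        simp
      rw [hΘ] at hco
      simpa [LinearMap.pi_apply, LinearMap.comp_apply, hcoeffL, htoFβ] using hco
    · push_neg at hbox
      obtain ⟨j, hj⟩ := hbox
      apply coeff_eq_zero_of_totalDegree_lt
      have hd1 : (Qm cc).totalDegree ≤ (A - 1) + d * (n * (v - 1)) := by
        rw [hQm]
        refine le_trans (totalDegree_finset_sum _ _) ?_
        apply Finset.sup_le
        intro u _
        exact le_trans (totalDegree_smul_le _ _) (hMod u)
      have hβ : 2 * d * n * v ≤ ∑ j' ∈ β.support, β j' := by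
        have h1 : β j ≤ ∑ j' ∈ β.support, β j' := by
          rw [← mdeg_def]; exact entry_le_mdeg β j
        omega
      have hT : (A - 1) + d * (n * (v - 1)) < 2 * d * n * v := by
        have h2 : d * (n * (v - 1)) ≤ d * (n * v) := Nat.mul_le_mul_left _
          (Nat.mul_le_mul_left _ (by omega))
        have h3 : A + d * (n * v) = 2 * d * n * v := by rw [hA]; ring
        omega
      omega
  -- the auxiliary polynomials r a
  set wF : (Fin n → Fin v) → (Fin n →₀ ℕ) :=
    fun w => Finsupp.equivFunOnFinite.symm (fun j => (w j : ℕ)) with hwF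
  have hwFapp : ∀ w j, (wF w) j = (w j : ℕ) := by
    intro w j
    rw [hwF]
    simp
  set r : Fin A → MvPolynomial (Fin n) k :=
    fun a => ∑ w : Fin n → Fin v, cc (a, w) • monomial (wF w) (1 : k) with hr
  have hwFinj : Function.Injective wF := by
    intro w w' h
    funext j
    have := congrArg (fun δ : Fin n →₀ ℕ => δ j) h
    simp only [hwFapp] at this
    exact Fin.ext this
  have hcoeffr : ∀ (a : Fin A) (w : Fin n → Fin v), coeff (wF w) (r a) = cc (a, w) := by
    intro a w
    rw [hr]
    rw [MvPolynomial.coeff_sum]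
    rw [Finset.sum_eq_single w]
    · simp [coeff_smul, coeff_monomial]
    · intro w' _ hne
      have : wF w' ≠ wF w := fun h => hne (hwFinj h)
      simp [coeff_smul, coeff_monomial, this]
    · intro h
      exact absurd (Finset.mem_univ w) h
  have hrne : ∃ a, r a ≠ 0 := by
    by_contra hall
    push_neg at hall
    apply hcc0
    funext u
    obtain ⟨a, w⟩ := u
    have h := hcoeffr a w
    rw [hall a, coeff_zero] at h
    exact h.symm
  have hrdeg : ∀ a, (r a).totalDegree ≤ n * (v - 1) := by
    intro a
    rw [hr]
    refine le_trans (totalDegree_finset_sum _ _) ?_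
    apply Finset.sup_le
    intro w _
    refine le_trans (totalDegree_smul_le _ _) ?_
    refine le_trans (totalDegree_monomial_le _ _) ?_
    have hm : mdeg (wF w) = ∑ j, (w j : ℕ) := by
      rw [mdeg_eq_sum_univ]
      exact Finset.sum_congr rfl fun j _ => hwFapp w j
    have : mdeg (wF w) ≤ n * (v - 1) := by
      rw [hm]
      calc ∑ j, (w j : ℕ) ≤ ∑ _j : Fin n, (v - 1) := Finset.sum_le_sum fun j _ => by
            have := (w j).isLt; omega
      _ = n * (v - 1) := by rw [Finset.sum_const, card_univ, Fintype.card_fin, smul_eq_mul]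
    exact this
  -- the key relation
  have haev : ∀ (w : Fin n → Fin v),
      (aeval F) (monomial (wF w) (1 : k)) = ∏ j, F j ^ ((w j : ℕ)) := by
    intro w
    rw [aeval_monomial, map_one, one_mul, Finsupp.prod_pow]
    exact Finset.prod_congr rfl fun j _ => by rw [hwFapp]
  have hkey : ∑ a : Fin A, (aeval F (r a)) * (X i) ^ (a : ℕ) = Qm cc := by
    rw [hQm, Fintype.sum_prod_type]
    apply Finset.sum_congr rfl
    intro a _
    rw [hr]
    rw [map_sum (aeval F), Finset.sum_mul]
    apply Finset.sum_congr rfl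
    intro w _
    rw [map_smul, haev, smul_mul_assoc, hMo]
    congr 1
    ring
  -- compose with the inverse substitution
  have hcomp : ∀ q : MvPolynomial (Fin n) k, bind₁ G (aeval F q) = q := by
    intro q
    have hcomp2 : (bind₁ G).comp (aeval (R := k) F) = AlgHom.id k _ := by
      apply algHom_ext
      intro j
      simp [h1 j]
    calc bind₁ G (aeval F q) = ((bind₁ G).comp (aeval (R := k) F)) q := rfl
    _ = q := by rw [hcomp2]; rfl
  have hfin : ∑ a : Fin A, r a * (G i) ^ (a : ℕ) = 0 := by
    have hzero := congrArg (bind₁ G) hkey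
    rw [hQcc, map_zero, map_sum] at hzero
    rw [← hzero]
    apply Finset.sum_congr rfl
    intro a _
    rw [map_mul, map_pow, bind₁_X_right, hcomp]
  have hbound := totalDegree_le_of_annihilated (G i) r hrdeg hrne hfin
  calc (G i).totalDegree ≤ n * (v - 1) := hbound
  _ ≤ n * (2 * d * n) ^ n := Nat.mul_le_mul_left _ (by omega)


end JC


namespace JC
open Finset

variable {n : ℕ}

lemma mdeg_single_one (i : Fin n) : mdeg (Finsupp.single i 1) = 1 := by
  rw [mdeg]
  rw [Finsupp.sum_single_index]
  rfl

lemma mem_midxSet {d : ℕ} {β : Fin n →₀ ℕ} :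
    β ∈ midxSet n d ↔ 2 ≤ mdeg β ∧ mdeg β ≤ d := by
  rw [midxSet, Finset.mem_filter, Finset.mem_Iic]
  constructor
  · rintro ⟨-, h⟩; exact h
  · intro h
    refine ⟨?_, h⟩
    rw [Finsupp.le_def]
    intro j
    have h1 : β j ≤ mdeg β := entry_le_mdeg β j
    have h2 : (Finsupp.equivFunOnFinite.symm fun _ : Fin n => d) j = d := by simp
    omega

lemma map_psi_univFZ {R : Type*} [CommRing R] (d : ℕ) (F : Fin n → MvPolynomial (Fin n) R)
    (hdeg : DegLE F d) (haff : AffinePartId F) (i : Fin n) :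
    MvPolynomial.map (psi d F) (univFZ n d i) = F i := by
  classical
  have hstep : MvPolynomial.map (psi d F) (univFZ n d i)
      = X i + ∑ α ∈ (midxSet n d).attach,
          monomial (α : Fin n →₀ ℕ) (coeff (α : Fin n →₀ ℕ) (F i)) := by
    rw [univFZ, map_add, map_X, map_sum]
    congr 1
    apply Finset.sum_congr rfl
    intro α _
    rw [map_monomial]
    congr 1
    exact eval₂Hom_X' _ _ _
  rw [hstep, Finset.sum_attach (midxSet n d)
    (fun γ => monomial γ (coeff γ (F i)))]
  apply MvPolynomial.ext
  intro β
  rw [coeff_add, MvPolynomial.coeff_sum]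
  simp only [coeff_monomial]
  rw [Finset.sum_ite_eq' (midxSet n d) β (fun γ => coeff γ (F i))]
  by_cases hmem : β ∈ midxSet n d
  · rw [if_pos hmem]
    have h2 : 2 ≤ mdeg β := (mem_midxSet.mp hmem).1
    have hX : coeff β (X i : MvPolynomial (Fin n) R) = 0 := by
      rw [coeff_X']
      rw [if_neg]
      intro hcon
      rw [← hcon] at h2
      rw [mdeg_single_one] at h2
      omega
    rw [hX, zero_add]
  · rw [if_neg hmem, add_zero]
    by_cases hlow : mdeg β ≤ 1
    · exact (haff i β hlow).symm
    · have hbig : d < mdeg β := by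
        by_contra hle
        push_neg at hle
        exact hmem (mem_midxSet.mpr ⟨by omega, hle⟩)
      have h1 : coeff β (F i) = 0 := by
        apply coeff_eq_zero_of_totalDegree_lt
        have := hdeg i
        rw [← mdeg_def]
        omega
      have h2 : coeff β (X i : MvPolynomial (Fin n) R) = 0 := by
        rw [coeff_X', if_neg]
        intro hcon
        exact hlow (by rw [← hcon, mdeg_single_one])
      rw [h1, h2]

lemma psi_Ecoef {R : Type*} [CommRing R] (d : ℕ) (F : Fin n → MvPolynomial (Fin n) R)
    (hdeg : DegLE F d) (haff : AffinePartId F) (β : Fin n →₀ ℕ) :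
    psi d F (Ecoef n d β) = coeff β (jacDet F - 1) := by
  rw [Ecoef, ← coeff_map]
  congr 1
  rw [map_sub, map_one]
  congr 1
  rw [jacDet, jacDet, RingHom.map_det]
  congr 1
  apply Matrix.ext
  intro i j
  rw [RingHom.mapMatrix_apply, Matrix.map_apply, Matrix.of_apply, Matrix.of_apply]
  rw [← pderiv_map, map_psi_univFZ d F hdeg haff]

lemma psi_zero_on_Jzd (d : ℕ) (F : Fin n → MvPolynomial (Fin n) ℤ)
    (hdeg : DegLE F d) (haff : AffinePartId F) (hjac : jacDet F = 1) :
    ∀ Q ∈ Jzd n d, psi d F Q = 0 := by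
  intro Q hQ
  set χ : MvPolynomial (Idx n d) ℚ →+* ℚ :=
    eval₂Hom (RingHom.id ℚ) (fun v => ((coeff v.2.1 (F v.1) : ℤ) : ℚ)) with hχ
  have hcompat : χ.comp (toQ n d) = (Int.castRingHom ℚ).comp (psi d F) := by
    apply ringHom_ext
    · intro r
      simp [hχ, toQ, psi]
    · intro v
      simp [hχ, toQ, psi]
  have hgen : ∀ β : Fin n →₀ ℕ, χ (toQ n d (Ecoef n d β)) = 0 := by
    intro β
    have h1 : χ (toQ n d (Ecoef n d β)) = ((psi d F (Ecoef n d β) : ℤ) : ℚ) := by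
      rw [← RingHom.comp_apply, hcompat, RingHom.comp_apply]
      rfl
    rw [h1, psi_Ecoef d F hdeg haff, hjac, sub_self, coeff_zero, Int.cast_zero]
  have hIq : Iqd n d ≤ RingHom.ker χ := by
    rw [Iqd, Ideal.span_le]
    rintro x ⟨β, rfl⟩
    exact hgen β
  have hrad : (Iqd n d).radical ≤ RingHom.ker χ :=
    ((RingHom.ker_isPrime χ).radical_le_iff).mpr hIq
  have hmem : toQ n d Q ∈ (Iqd n d).radical := hQ
  have hzero : χ (toQ n d Q) = 0 := hrad hmem
  have h2 : ((psi d F Q : ℤ) : ℚ) = 0 := by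
    rw [← hzero, ← RingHom.comp_apply, hcompat, RingHom.comp_apply]
    rfl
  exact_mod_cast h2

lemma psi_map_comp {R S : Type*} [CommRing R] [CommRing S] (d : ℕ) (φ : R →+* S)
    (F : Fin n → MvPolynomial (Fin n) R) :
    psi d (fun i => MvPolynomial.map φ (F i)) = φ.comp (psi d F) := by
  apply ringHom_ext
  · intro r
    simp [psi]
  · intro v
    simp [psi, coeff_map]

lemma affine_map {R S : Type*} [CommRing R] [CommRing S] (φ : R →+* S)
    {F : Fin n → MvPolynomial (Fin n) R} (haff : AffinePartId F) :
    AffinePartId (fun i => MvPolynomial.map φ (F i)) := by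
  intro i α hα
  show coeff α (MvPolynomial.map φ (F i)) = _
  rw [coeff_map, haff i α hα, ← coeff_map, map_X]

lemma degle_map {R S : Type*} [CommRing R] [CommRing S] (φ : R →+* S)
    {F : Fin n → MvPolynomial (Fin n) R} {d : ℕ} (h : DegLE F d) :
    DegLE (fun i => MvPolynomial.map φ (F i)) d := by
  intro i
  refine le_trans ?_ (h i)
  show (MvPolynomial.map φ (F i)).totalDegree ≤ (F i).totalDegree
  simp only [MvPolynomial.totalDegree]
  exact Finset.sup_mono (support_map_subset φ (F i))

lemma lowDeg_one_of_section {R : Type*} [CommRing R] (F G : Fin n → MvPolynomial (Fin n) R)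
    (hF : ∀ j, constantCoeff (F j) = 0) (h : ∀ j, bind₁ F (G j) = X j) :
    ∀ j, LowDeg 1 (G j) := by
  have hcc : ∀ Q : MvPolynomial (Fin n) R, constantCoeff (bind₁ F Q) = constantCoeff Q := by
    intro Q
    have hh : (constantCoeff.comp (bind₁ F : MvPolynomial (Fin n) R →ₐ[R]
        MvPolynomial (Fin n) R).toRingHom) = constantCoeff := by
      apply ringHom_ext
      · intro r
        simp
      · intro j
        simp [hF j]
    calc constantCoeff (bind₁ F Q) = (constantCoeff.comp (bind₁ F :
        MvPolynomial (Fin n) R →ₐ[R] MvPolynomial (Fin n) R).toRingHom) Q := rfl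
    _ = constantCoeff Q := by rw [hh]
  intro j β hβ
  have hβ0 : β = 0 := eq_zero_of_mdeg_eq_zero (by omega)
  subst hβ0
  have h1 : constantCoeff (G j) = 0 := by
    rw [← hcc (G j), h j, constantCoeff_X]
  rw [← constantCoeff_eq]
  exact h1

end JC
/-- If for all but finitely many primes `p` every strong Keller map over
`𝔽_p` is invertible, then every `F ∈ ME_n(ℤ)` with affine part identity and
`det(Jac(F)) = 1` is invertible over `ℤ`. -/
theorem jc_over_Z_from_jc_mod_p (n : ℕ) (hn : 1 ≤ n)
    (H : {p : ℕ | p.Prime ∧ ¬ ∀ F : Fin n → MvPolynomial (Fin n) (ZMod p),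
        AffinePartId F → IsSKEAll n F → IsInvertible F}.Finite) :
    ∀ F : Fin n → MvPolynomial (Fin n) ℤ,
      AffinePartId F → jacDet F = 1 → IsInvertible F := by
  classical
  intro F haff hjac
  -- the degree bound for F
  set d := max 2 (Finset.univ.sup fun i => (F i).totalDegree) with hd
  have hd2 : 2 ≤ d := le_max_left _ _
  have hdeg : DegLE F d := by
    intro i
    have h1 : (F i).totalDegree ≤ Finset.univ.sup fun j => (F j).totalDegree :=
      Finset.le_sup (f := fun j => (F j).totalDegree) (Finset.mem_univ i)
    have h2 : (Finset.univ.sup fun j => (F j).totalDegree) ≤ d := le_max_right _ _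
    omega
  have haffLD : ∀ i, JC.LowDeg 2 (X i - F i) := by
    intro i β hβ
    rw [MvPolynomial.coeff_sub, haff i β (by omega), sub_self]
  -- the degree bound for the inverse, and the candidate inverse over ℤ
  set D := n * (2 * d * n) ^ n with hD
  set Ghat : Fin n → MvPolynomial (Fin n) ℤ :=
    fun i => JC.truncD D (JC.invSeq F D i) with hGhat
  -- the set of good primes
  set Good := {p : ℕ | p.Prime} \ {p : ℕ | p.Prime ∧ ¬ ∀ Fp : Fin n → MvPolynomial (Fin n) (ZMod p),
      AffinePartId Fp → IsSKEAll n Fp → IsInvertible Fp} with hGoodDef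
  have hGood : Good.Infinite := Nat.infinite_setOf_prime.diff H
  -- a nonzero integer cannot die modulo all good primes
  have hzero : ∀ z : ℤ, (∀ p ∈ Good, (z : ZMod p) = 0) → z = 0 := by
    intro z hz
    by_contra h0
    obtain ⟨p, hp, hpz⟩ := hGood.exists_gt z.natAbs
    have hprime : p.Prime := hp.1
    haveI : NeZero p := ⟨hprime.pos.ne'⟩
    have hdvd : (p : ℤ) ∣ z := (ZMod.intCast_zmod_eq_zero_iff_dvd z p).mp (hz p hp)
    have hdvd2 : p ∣ z.natAbs := Int.natCast_dvd_natCast.mp (Int.dvd_natAbs.mpr hdvd)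
    exact h0 (Int.natAbs_eq_zero.mp (Nat.eq_zero_of_dvd_of_lt hdvd2 hpz))
  -- a polynomial over ℤ vanishing modulo all good primes is zero
  have hPzero : ∀ Q : MvPolynomial (Fin n) ℤ,
      (∀ p ∈ Good, MvPolynomial.map (Int.castRingHom (ZMod p)) Q = 0) → Q = 0 := by
    intro Q hQ
    apply MvPolynomial.ext
    intro β
    rw [coeff_zero]
    apply hzero
    intro p hp
    have h1 := congrArg (coeff β) (hQ p hp)
    rwa [coeff_map, coeff_zero] at h1
  -- the per-prime analysis
  have hperp : ∀ p ∈ Good, ∀ i : Fin n,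
      MvPolynomial.map (Int.castRingHom (ZMod p)) (bind₁ Ghat (F i) - X i) = 0 ∧
      MvPolynomial.map (Int.castRingHom (ZMod p)) (bind₁ F (Ghat i) - X i) = 0 := by
    intro p hp
    have hprime : p.Prime := hp.1
    haveI : Fact p.Prime := ⟨hprime⟩
    set φp := Int.castRingHom (ZMod p) with hφp
    set Fp : Fin n → MvPolynomial (Fin n) (ZMod p) :=
      fun j => MvPolynomial.map φp (F j) with hFp
    have haffp : AffinePartId Fp := JC.affine_map φp haff
    have hdegp : DegLE Fp d := JC.degle_map φp hdeg
    have hSKE : IsSKE n d Fp := by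
      intro Q hQ
      have h1 : psi d Fp = φp.comp (psi d F) := JC.psi_map_comp d φp F
      rw [h1, RingHom.comp_apply,
        JC.psi_zero_on_Jzd d F hdeg haff hjac Q hQ, map_zero]
    have hforall : ∀ Fq : Fin n → MvPolynomial (Fin n) (ZMod p),
        AffinePartId Fq → IsSKEAll n Fq → IsInvertible Fq := by
      by_contra hcon
      exact hp.2 ⟨hprime, hcon⟩
    obtain ⟨Gp, hGp1, hGp2⟩ := hforall Fp haffp ⟨d, hd2, hdegp, hSKE⟩
    -- low-degree facts
    have haffpLD : ∀ i, JC.LowDeg 2 (X i - Fp i) := by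
      intro i β hβ
      rw [MvPolynomial.coeff_sub, haffp i β (by omega), sub_self]
    have hFpcc : ∀ j, constantCoeff (Fp j) = 0 := by
      intro j
      rw [constantCoeff_eq]
      show coeff 0 (Fp j) = 0
      rw [haffp j 0 (by simp [mdeg]), coeff_zero_X]
    have hGpLD1 : ∀ j, JC.LowDeg 1 (Gp j) := JC.lowDeg_one_of_section Fp Gp hFpcc hGp2
    -- degree bound for the inverse
    have hGpdeg : ∀ i, (Gp i).totalDegree ≤ D :=
      fun i => JC.inverse_degree_bound hn hd2 Fp Gp hdegp hGp1 i
    -- uniqueness: the reduced recursion agrees with Gp up to degree D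
    have hGpexact : ∀ i, JC.LowDeg (D + 1) (bind₁ Gp (Fp i) - X i) := by
      intro i
      rw [hGp1 i, sub_self]
      exact JC.lowDeg_zero _
    have huni := JC.invSeq_unique haffpLD (JC.invSeq Fp D) Gp
      (JC.invSeq_lowDeg1 haffpLD D) hGpLD1 (JC.invSeq_inverts haffpLD D) hGpexact
    -- the reduction of Ghat is Gp
    have hGhatmap : ∀ i, MvPolynomial.map φp (Ghat i) = Gp i := by
      intro i
      apply MvPolynomial.ext
      intro β
      rw [coeff_map, hGhat]
      show φp (coeff β (JC.truncD D (JC.invSeq F D i))) = _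
      rw [JC.coeff_truncD]
      by_cases hβ : mdeg β ≤ D
      · rw [if_pos hβ]
        have h1 : φp (coeff β (JC.invSeq F D i)) = coeff β (JC.invSeq Fp D i) := by
          rw [← coeff_map, JC.map_invSeq φp F D i]
        rw [h1]
        have h2 := huni i β (by omega)
        rw [MvPolynomial.coeff_sub] at h2
        exact eq_of_sub_eq_zero h2
      · rw [if_neg hβ, map_zero]
        symm
        apply coeff_eq_zero_of_totalDegree_lt
        have h3 := hGpdeg i
        have h4 : mdeg β = ∑ j ∈ β.support, β j := JC.mdeg_def β
        omega
    -- conclude the two identities modulo p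
    intro i
    constructor
    · rw [map_sub, map_bind₁, map_X]
      have hfun : (fun j => MvPolynomial.map φp (Ghat j)) = Gp := funext hGhatmap
      rw [hfun]
      show bind₁ Gp (Fp i) - X i = 0
      rw [hGp1 i, sub_self]
    · rw [map_sub, map_bind₁, map_X]
      have hfun : (fun j => MvPolynomial.map φp (F j)) = Fp := rfl
      rw [hfun, hGhatmap i]
      rw [hGp2 i, sub_self]
  -- assemble
  refine ⟨Ghat, fun i => ?_, fun i => ?_⟩
  · have h1 := hPzero _ (fun p hp => (hperp p hp i).1)
    exact sub_eq_zero.mp h1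
  · have h1 := hPzero _ (fun p hp => (hperp p hp i).2)
    exact sub_eq_zero.mp h1

end
end

section
/- Assume Conjecture 2, fix n ≥ 1 and a prime p, and suppose that every Keller map in ME_n(ℤ) is invertible over ℤ. Then every strong Keller map in ME_n(𝔽_p) is invertible over 𝔽_p. -/
open MvPolynomial

noncomputable section

/-- **Conjecture 1(1).** For every ℤ-algebra `R`, field `k` and surjective `τ : R → k`,
every invertible polynomial map over `k` with Jacobian determinant 1 lifts along `π` to an
invertible polynomial map over `R` with Jacobian determinant 1. -/
def Conj1_1 : Prop :=
  ∀ (n : ℕ), 1 ≤ n →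
  ∀ (R : Type) [CommRing R], ∀ (k : Type) [Field k],
  ∀ (τ : R →+* k), Function.Surjective τ →
  ∀ f : Fin n → MvPolynomial (Fin n) k, IsInvertible f → jacDet f = 1 →
    ∃ F : Fin n → MvPolynomial (Fin n) R, IsInvertible F ∧ jacDet F = 1 ∧
      ∀ i, MvPolynomial.map τ (F i) = f i

/-- **Conjecture 1(2).** For every ℤ-algebra `R`, field `k` and surjective `τ : R → k`,
every Keller map `F` over `R` whose image `π(F)` is invertible over `k` with Jacobian
determinant 1 is itself invertible over `R`. -/
def Conj1_2 : Prop :=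
  ∀ (n : ℕ), 1 ≤ n →
  ∀ (R : Type) [CommRing R], ∀ (k : Type) [Field k],
  ∀ (τ : R →+* k), Function.Surjective τ →
  ∀ F : Fin n → MvPolynomial (Fin n) R, jacDet F = 1 →
    IsInvertible (fun i => MvPolynomial.map τ (F i)) →
    jacDet (fun i => MvPolynomial.map τ (F i)) = 1 →
    IsInvertible F

/-- **Conjecture 2.** For every ℤ-algebra `R`, field `k` of characteristic `p`, and
surjective `τ : R → k`, every strong Keller map over `k` with affine part identity is the
image under `π` of a polynomial map over `R` with affine part identity and Jacobian
determinant 1. -/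
def Conj2 : Prop :=
  ∀ (n : ℕ), 1 ≤ n →
  ∀ (R : Type) [CommRing R], ∀ (k : Type) [Field k], ∀ (p : ℕ), p.Prime → CharP k p →
  ∀ (τ : R →+* k), Function.Surjective τ →
  ∀ f : Fin n → MvPolynomial (Fin n) k, AffinePartId f → IsSKEAll n f →
    ∃ F : Fin n → MvPolynomial (Fin n) R, AffinePartId F ∧ jacDet F = 1 ∧
      ∀ i, MvPolynomial.map τ (F i) = f i

/-- Assuming Conjecture 2: if every Keller map over `ℤ` (in dimension n)
is invertible over `ℤ`, then every strong Keller map over `𝔽_p` is invertible. -/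
theorem jc_mod_p_from_jc_over_Z (h2 : Conj2) (n p : ℕ) (hn : 1 ≤ n) (hp : p.Prime)
    (HZ : ∀ F : Fin n → MvPolynomial (Fin n) ℤ, jacDet F = 1 → IsInvertible F) :
    ∀ f : Fin n → MvPolynomial (Fin n) (ZMod p),
      AffinePartId f → IsSKEAll n f → IsInvertible f := by
  intro f haff hske
  haveI : Fact p.Prime := ⟨hp⟩
  obtain ⟨F, hFaff, hFjac, hFmap⟩ :=
    h2 n hn ℤ (ZMod p) p hp (ZMod.charP p) (Int.castRingHom (ZMod p))
      ZMod.intCast_surjective f haff hske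
  obtain ⟨G, hGF, hFG⟩ := HZ F hFjac
  refine ⟨fun i => MvPolynomial.map (Int.castRingHom (ZMod p)) (G i), ?_, ?_⟩
  · intro i
    rw [← hFmap i, ← MvPolynomial.map_bind₁, hGF i, MvPolynomial.map_X]
  · intro i
    have : f = fun j => MvPolynomial.map (Int.castRingHom (ZMod p)) (F j) :=
      funext fun j => (hFmap j).symm
    rw [this, ← MvPolynomial.map_bind₁, hFG i, MvPolynomial.map_X]

end
end

section
/- Fix n ≥ 1 and d ≥ 2. There exists a positive integer N_d such that for every prime p > N_d the following holds in C_{ℤ_(p),d}, the polynomial ring in the variables c_{i,α} over the localization ℤ_(p) of ℤ at the prime (p): the ideal of C_{ℤ_(p),d} generated by the image of J_ℤ^d equals the radical of the ideal of C_{ℤ_(p),d} generated by the images of the generators E_β of I_ℚ^d. -/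
open MvPolynomial

noncomputable section

/-! ### Auxiliary lemmas -/

attribute [local instance] MvPolynomial.algebraMvPolynomial

lemma apply_le_mdeg {n : ℕ} (α : Fin n →₀ ℕ) (i : Fin n) : α i ≤ mdeg α := by
  unfold mdeg Finsupp.sum
  by_cases h : α i = 0
  · simp [h]
  · exact Finset.single_le_sum (fun _ _ => Nat.zero_le _) (Finsupp.mem_support_iff.mpr h)

instance midx_finite (n d : ℕ) : Finite {α : Fin n →₀ ℕ // 2 ≤ mdeg α ∧ mdeg α ≤ d} := by
  apply Finite.of_injective
    (f := fun α : {α : Fin n →₀ ℕ // 2 ≤ mdeg α ∧ mdeg α ≤ d} =>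
      (fun i => (⟨α.1 i, Nat.lt_succ_of_le ((apply_le_mdeg α.1 i).trans α.2.2)⟩ : Fin (d + 1)) :
        Fin n → Fin (d + 1)))
  intro α β h
  exact Subtype.ext (Finsupp.ext fun i => congrArg Fin.val (congrFun h i))

lemma toQ_injective (n d : ℕ) : Function.Injective (toQ n d) :=
  MvPolynomial.map_injective (Int.castRingHom ℚ) Int.cast_injective

lemma toQ_eq_algebraMap (n d : ℕ) :
    (toQ n d : MvPolynomial (Idx n d) ℤ →+* MvPolynomial (Idx n d) ℚ) =
      algebraMap (MvPolynomial (Idx n d) ℤ) (MvPolynomial (Idx n d) ℚ) := by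
  rw [MvPolynomial.algebraMap_def, algebraMap_int_eq]; rfl

lemma Iqd_eq_map (n d : ℕ) :
    Iqd n d = Ideal.map (toQ n d) (Ideal.span (Set.range (Ecoef n d))) := by
  rw [Iqd, Ideal.map_span, ← Set.range_comp]; rfl

/-- Clearing denominators: if `q ∈ J_ℤ^d`, then some nonzero integer multiple of a power of
`q` lies in the ideal of `C_{ℤ,d}` generated by the `E_β`. -/
lemma jzd_clear_denominators (n d : ℕ) (q : MvPolynomial (Idx n d) ℤ) (hq : q ∈ Jzd n d) :
    ∃ (k : ℤ) (m : ℕ), k ≠ 0 ∧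
      MvPolynomial.C k * q ^ m ∈ Ideal.span (Set.range (Ecoef n d)) := by
  have hrad : toQ n d q ∈ (Iqd n d).radical := hq
  obtain ⟨m, hm⟩ := Ideal.mem_radical_iff.mp hrad
  rw [Iqd_eq_map, toQ_eq_algebraMap] at hm
  rw [← map_pow] at hm
  obtain ⟨⟨a, s⟩, hs⟩ := (IsLocalization.mem_map_algebraMap_iff
    ((nonZeroDivisors ℤ).map (MvPolynomial.C (σ := Idx n d)))
    (MvPolynomial (Idx n d) ℚ)).mp hm
  obtain ⟨k, hk, hks⟩ := s.2
  refine ⟨k, m, nonZeroDivisors.ne_zero hk, ?_⟩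
  have : algebraMap (MvPolynomial (Idx n d) ℤ) (MvPolynomial (Idx n d) ℚ)
      (MvPolynomial.C k * q ^ m) = algebraMap _ _ (a : MvPolynomial (Idx n d) ℤ) := by
    rw [map_mul, mul_comm]
    rw [← hs, ← hks]
  have heq : MvPolynomial.C k * q ^ m = (a : MvPolynomial (Idx n d) ℤ) := by
    apply toQ_injective n d
    rw [toQ_eq_algebraMap]; exact this
  rw [heq]; exact a.2

/-- There is `N_d > 0` such that for every prime `p > N_d`, in
`C_{ℤ_(p),d}` (polynomial ring over the localization of `ℤ` at the prime ideal `(p)`),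
the ideal generated by the image of `J_ℤ^d` equals the radical of the ideal generated by
the images of the generators `E_β` of `I_ℚ^d`. -/
theorem Jzd_localization_eq_radical (n d : ℕ) (hn : 1 ≤ n) (hd : 2 ≤ d) :
    ∃ N : ℕ, 0 < N ∧ ∀ p : ℕ, p.Prime → N < p →
      ∀ (hP : (Ideal.span {(p : ℤ)}).IsPrime),
        Ideal.map
          (MvPolynomial.map (algebraMap ℤ
            (Localization (@Ideal.primeCompl ℤ _ (Ideal.span {(p : ℤ)}) hP))) :
              MvPolynomial (Idx n d) ℤ →+*
              MvPolynomial (Idx n d)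
                (Localization (@Ideal.primeCompl ℤ _ (Ideal.span {(p : ℤ)}) hP)))
          (Jzd n d)
        =
        (Ideal.span (Set.range fun β : Fin n →₀ ℕ =>
          (MvPolynomial.map (algebraMap ℤ
            (Localization (@Ideal.primeCompl ℤ _ (Ideal.span {(p : ℤ)}) hP))))
            (Ecoef n d β))).radical := by
  classical
  obtain ⟨S, hS⟩ := (IsNoetherian.noetherian (Jzd n d) : (Jzd n d).FG)
  choose k m hk hmem using fun q : {x // x ∈ S} =>
    jzd_clear_denominators n d q.1 (hS ▸ Ideal.subset_span (Finset.mem_coe.mpr q.2))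
  set N : ℕ := ∏ q ∈ S.attach, (k q).natAbs with hN
  have hNpos : 0 < N := Finset.prod_pos fun q _ => Int.natAbs_pos.mpr (hk q)
  refine ⟨N, hNpos, ?_⟩
  intro p hp hpN hP
  haveI := hP
  set P : Ideal ℤ := Ideal.span {(p : ℤ)} with hPdef
  set Rp := Localization P.primeCompl with hRp
  set φ : MvPolynomial (Idx n d) ℤ →+* MvPolynomial (Idx n d) Rp :=
    MvPolynomial.map (algebraMap ℤ Rp) with hφ
  set I : Ideal (MvPolynomial (Idx n d) ℤ) := Ideal.span (Set.range (Ecoef n d)) with hI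
  have hφalg : φ = algebraMap (MvPolynomial (Idx n d) ℤ) (MvPolynomial (Idx n d) Rp) := rfl
  have hR : (Ideal.span (Set.range fun β : Fin n →₀ ℕ => φ (Ecoef n d β)))
      = Ideal.map φ I := by
    rw [hI, Ideal.map_span, ← Set.range_comp]; rfl
  -- the ring hom `Rp → ℚ`
  have hunits : ∀ s : P.primeCompl, IsUnit (Int.castRingHom ℚ s) := by
    rintro ⟨s, hs⟩
    have hs0 : s ≠ 0 := fun h => hs (h ▸ P.zero_mem)
    simpa using isUnit_iff_ne_zero.mpr (show ((s : ℤ) : ℚ) ≠ 0 by exact_mod_cast hs0)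
  set ρ : Rp →+* ℚ := IsLocalization.lift hunits with hρdef
  have hρ : ρ.comp (algebraMap ℤ Rp) = Int.castRingHom ℚ := IsLocalization.lift_comp hunits
  set ψ : MvPolynomial (Idx n d) Rp →+* MvPolynomial (Idx n d) ℚ := MvPolynomial.map ρ with hψ
  have hcomp : ψ.comp φ = toQ n d := by
    refine RingHom.ext fun x => ?_
    show ψ (φ x) = toQ n d x
    rw [hψ, hφ, MvPolynomial.map_map, hρ]; rfl
  refine le_antisymm ?_ ?_
  · -- `map φ (Jzd) ⊆ radical`
    rw [Ideal.map_le_iff_le_comap, ← hS, Submodule.span_le]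
    intro q hqS
    simp only [SetLike.mem_coe, Ideal.mem_comap]
    have hqS' : q ∈ S := Finset.mem_coe.mp hqS
    set q' : {x // x ∈ S} := ⟨q, hqS'⟩ with hq'
    -- `k q'` is not divisible by `p`
    have hkP : k q' ∉ P := by
      intro hmemP
      have hdvd : (p : ℤ) ∣ k q' := Ideal.mem_span_singleton.mp hmemP
      have hdvd' : p ∣ (k q').natAbs := by
        simpa using Int.natAbs_dvd_natAbs.mpr hdvd
      have hdvdN : (k q').natAbs ∣ N := Finset.dvd_prod_of_mem _ (Finset.mem_attach S q')
      exact absurd (Nat.le_of_dvd hNpos (hdvd'.trans hdvdN)) (not_le.mpr hpN)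
    have hkp : (k q') ∈ P.primeCompl := hkP
    have hunit : IsUnit (MvPolynomial.C (algebraMap ℤ Rp (k q')) :
        MvPolynomial (Idx n d) Rp) :=
      (IsLocalization.map_units Rp (⟨k q', hkp⟩ : P.primeCompl)).map
        (MvPolynomial.C : Rp →+* MvPolynomial (Idx n d) Rp)
    have h1 : φ (MvPolynomial.C (k q') * q ^ (m q')) ∈ Ideal.map φ I :=
      Ideal.mem_map_of_mem φ (hmem q')
    rw [map_mul, map_pow, hφ, MvPolynomial.map_C] at h1
    obtain ⟨u, hu⟩ := hunit
    have h2 : (φ q) ^ (m q') ∈ Ideal.map φ I := by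
      have h3 := Ideal.mul_mem_left _ (↑u⁻¹ : MvPolynomial (Idx n d) Rp) h1
      rwa [← hu, ← mul_assoc, Units.inv_mul, one_mul] at h3
    rw [hR]
    exact Ideal.mem_radical_iff.mpr ⟨m q', h2⟩
  · -- `radical ⊆ map φ (Jzd)`
    rw [hR]
    intro f hf
    obtain ⟨mf, hfm⟩ := Ideal.mem_radical_iff.mp hf
    obtain ⟨⟨g, t⟩, hgt⟩ := IsLocalization.surj
      (M := (P.primeCompl).map (MvPolynomial.C (σ := Idx n d))) f
    rw [← hφalg] at hgt
    have hunit_t : IsUnit (φ (t : MvPolynomial (Idx n d) ℤ)) := by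
      rw [hφalg]; exact IsLocalization.map_units _ t
    have hgJ : g ∈ Jzd n d := by
      show toQ n d g ∈ (Iqd n d).radical
      refine Ideal.mem_radical_iff.mpr ⟨mf, ?_⟩
      have h3 : (φ g) ^ mf ∈ Ideal.map φ I := by
        rw [← hgt, mul_pow]
        exact Ideal.mul_mem_right _ _ hfm
      have h4 : ψ ((φ g) ^ mf) ∈ Ideal.map ψ (Ideal.map φ I) := Ideal.mem_map_of_mem ψ h3
      rw [Ideal.map_map, hcomp, map_pow] at h4
      have : ψ (φ g) = toQ n d g := by rw [← hcomp]; rfl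
      rw [this] at h4
      rwa [← Iqd_eq_map] at h4
    have hφg : φ g ∈ Ideal.map φ (Jzd n d) := Ideal.mem_map_of_mem φ hgJ
    obtain ⟨u, hu⟩ := hunit_t
    have hf_eq : f = φ g * ↑u⁻¹ := by
      rw [Units.eq_mul_inv_iff_mul_eq, hu]
      exact hgt
    rw [hf_eq]
    exact Ideal.mul_mem_right _ _ hφg

end
end

section
/- Fix n ≥ 1 and d ≥ 2. There exists a positive integer N_d such that for every prime p > N_d and every F ∈ ME_n(ℤ) of degree ≤ d with affine part identity and det(Jac(F)) = 1, the coefficientwise reduction F mod p is a strong Keller map over 𝔽_p. -/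
open MvPolynomial

noncomputable section

namespace SKEAux

lemma apply_le_mdeg {n : ℕ} (α : Fin n →₀ ℕ) (i : Fin n) : α i ≤ mdeg α := by
  by_cases h : i ∈ α.support
  · exact Finset.single_le_sum (fun _ _ => Nat.zero_le _) h
  · simp [Finsupp.notMem_support_iff.mp h]

lemma mem_midxSet {n d : ℕ} (β : Fin n →₀ ℕ) :
    β ∈ midxSet n d ↔ 2 ≤ mdeg β ∧ mdeg β ≤ d := by
  constructor
  · intro h; exact (Finset.mem_filter.mp h).2
  · intro h
    refine Finset.mem_filter.mpr ⟨Finset.mem_Iic.mpr ?_, h⟩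
    rw [Finsupp.le_def]
    intro i
    simpa using (apply_le_mdeg β i).trans h.2

lemma mdeg_single {n : ℕ} (i : Fin n) : mdeg (Finsupp.single i 1) = 1 := by
  simp [mdeg, Finsupp.sum_single_index]

instance finite_midx (n d : ℕ) : Finite {α : Fin n →₀ ℕ // 2 ≤ mdeg α ∧ mdeg α ≤ d} := by
  have : {α : Fin n →₀ ℕ | 2 ≤ mdeg α ∧ mdeg α ≤ d}.Finite := by
    apply (midxSet n d).finite_toSet.subset
    intro α hα
    exact (mem_midxSet α).mpr hα
  exact this.to_subtype

lemma exists_denom {σ : Type*} (q : MvPolynomial σ ℚ) :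
    ∃ (M : ℤ) (b : MvPolynomial σ ℤ), M ≠ 0 ∧
      MvPolynomial.map (Int.castRingHom ℚ) b = MvPolynomial.C (M : ℚ) * q := by
  induction q using MvPolynomial.induction_on with
  | C a =>
      refine ⟨(a.den : ℤ), MvPolynomial.C a.num, by exact_mod_cast a.den_nz, ?_⟩
      rw [MvPolynomial.map_C, ← MvPolynomial.C_mul]
      have : ((a.num : ℚ)) = a * a.den := (Rat.mul_den_eq_num a).symm
      simp only [eq_intCast]
      push_cast
      rw [this, mul_comm]
  | add p q hp hq =>
      obtain ⟨M1, b1, hM1, hb1⟩ := hp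
      obtain ⟨M2, b2, hM2, hb2⟩ := hq
      refine ⟨M1 * M2, MvPolynomial.C M2 * b1 + MvPolynomial.C M1 * b2,
        mul_ne_zero hM1 hM2, ?_⟩
      rw [map_add, map_mul, map_mul, MvPolynomial.map_C, MvPolynomial.map_C, hb1, hb2]
      simp only [eq_intCast]
      push_cast
      rw [MvPolynomial.C_mul]
      ring
  | mul_X p i hp =>
      obtain ⟨M, b, hM, hb⟩ := hp
      refine ⟨M, b * MvPolynomial.X i, hM, ?_⟩
      rw [map_mul, MvPolynomial.map_X, hb]
      ring

lemma jacDet_map {n : ℕ} {R S : Type*} [CommRing R] [CommRing S] (φ : R →+* S)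
    (F : Fin n → MvPolynomial (Fin n) R) :
    MvPolynomial.map φ (jacDet F) = jacDet (fun i => MvPolynomial.map φ (F i)) := by
  unfold jacDet
  rw [RingHom.map_det]
  congr 1
  ext i j
  simp [pderiv_map]

lemma map_univ {n d : ℕ} {R : Type*} [CommRing R] (F : Fin n → MvPolynomial (Fin n) R)
    (hhigh : ∀ i β, d < mdeg β → coeff β (F i) = 0) (haff : AffinePartId F) (i : Fin n) :
    MvPolynomial.map (psi d F) (univFZ n d i) = F i := by
  classical
  ext β
  rw [coeff_map]
  have key : coeff β (univFZ n d i) = coeff β (X i)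
      + (if h : β ∈ midxSet n d then
          (X (⟨i, ⟨β, (mem_midxSet β).mp h⟩⟩ : Idx n d) :
            MvPolynomial (Idx n d) ℤ) else 0) := by
    unfold univFZ
    rw [coeff_add, coeff_sum]
    congr 1
    simp only [coeff_monomial]
    split
    next h =>
      rw [Finset.sum_eq_single_of_mem (⟨β, h⟩ : {x // x ∈ midxSet n d})
        (Finset.mem_attach _ _)]
      · simp
      · intro α _ hne
        rw [if_neg]
        intro heq
        exact hne (Subtype.ext heq)
    next h =>
      apply Finset.sum_eq_zero
      intro α _
      rw [if_neg]
      intro heq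
      exact h (heq ▸ α.2)
  rw [key, map_add]
  have hX : (psi d F) (coeff β (X i : MvPolynomial (Fin n) (MvPolynomial (Idx n d) ℤ)))
      = coeff β (X i : MvPolynomial (Fin n) R) := by
    rw [coeff_X', coeff_X', apply_ite (psi d F), map_one, map_zero]
  by_cases h : β ∈ midxSet n d
  · rw [dif_pos h]
    have h2 : ¬ (Finsupp.single i 1 = β) := by
      intro heq
      have := ((mem_midxSet β).mp h).1
      rw [← heq, mdeg_single] at this
      omega
    rw [coeff_X', if_neg h2, map_zero, zero_add]
    exact eval₂Hom_X' _ _ _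
  · rw [dif_neg h, map_zero, add_zero, hX]
    by_cases h1 : mdeg β ≤ 1
    · exact (haff i β h1).symm
    · have hd : d < mdeg β := by
        by_contra hc
        exact h ((mem_midxSet β).mpr ⟨by omega, by omega⟩)
      rw [hhigh i β hd, coeff_X', if_neg]
      intro heq
      rw [← heq, mdeg_single] at h1
      omega

lemma psi_Ecoef {n d : ℕ} {R : Type*} [CommRing R] (F : Fin n → MvPolynomial (Fin n) R)
    (hhigh : ∀ i β, d < mdeg β → coeff β (F i) = 0) (haff : AffinePartId F)
    (hjac : jacDet F = 1) (β : Fin n →₀ ℕ) : psi d F (Ecoef n d β) = 0 := by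
  have h1 : psi d F (Ecoef n d β)
      = coeff β (MvPolynomial.map (psi d F) (jacDet (univFZ n d) - 1)) := by
    rw [coeff_map]; rfl
  rw [h1, map_sub, map_one, jacDet_map]
  have h2 : (fun i => MvPolynomial.map (psi d F) (univFZ n d i)) = F := by
    funext i
    exact map_univ F hhigh haff i
  rw [h2, hjac, sub_self, coeff_zero]

/-- Main denominator-clearing step: every element of `Jzd` has an integer multiple of
a power lying in the ℤ-span of the `Ecoef`. -/
lemma exists_int_multiple {n d : ℕ} (x : MvPolynomial (Idx n d) ℤ) (hx : x ∈ Jzd n d) :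
    ∃ (M : ℤ) (k : ℕ), M ≠ 0 ∧
      MvPolynomial.C M * x ^ (k + 1) ∈ Ideal.span (Set.range (Ecoef n d)) := by
  classical
  obtain ⟨m, hm⟩ := (Ideal.mem_comap.mp hx)
  have hm1 : (toQ n d x) ^ (m + 1) ∈ Iqd n d := by
    rw [pow_succ']
    exact Ideal.mul_mem_left _ _ hm
  rw [Iqd] at hm1
  obtain ⟨c, hc⟩ := Finsupp.mem_span_range_iff_exists_finsupp.mp hm1
  choose Mf bf hMf hbf using fun β => exists_denom (c β)
  refine ⟨∏ β ∈ c.support, Mf β, m, Finset.prod_ne_zero_iff.mpr fun β _ => hMf β, ?_⟩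
  have key : toQ n d (MvPolynomial.C (∏ β ∈ c.support, Mf β) * x ^ (m + 1))
      = toQ n d (∑ β ∈ c.support,
          MvPolynomial.C (∏ γ ∈ c.support.erase β, Mf γ) * bf β * Ecoef n d β) := by
    rw [map_mul, map_pow, map_sum]
    have hCl : ∀ (M : ℤ), toQ n d (MvPolynomial.C M) = MvPolynomial.C (M : ℚ) := by
      intro M; exact MvPolynomial.map_C _ _
    rw [hCl, ← hc, Finsupp.sum, Finset.mul_sum]
    apply Finset.sum_congr rfl
    intro β hβ
    have hb : toQ n d (bf β) = MvPolynomial.C ((Mf β : ℤ) : ℚ) * c β := hbf β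
    rw [map_mul, map_mul, hCl, hb, smul_eq_mul]
    have hprod : (((∏ γ ∈ c.support, Mf γ) : ℤ) : ℚ)
        = (((Mf β) : ℤ) : ℚ) * (((∏ γ ∈ c.support.erase β, Mf γ) : ℤ) : ℚ) := by
      have h := Finset.mul_prod_erase c.support Mf hβ
      exact_mod_cast h.symm
    rw [hprod, MvPolynomial.C_mul]
    ring
  have hinj : Function.Injective (toQ n d) :=
    MvPolynomial.map_injective _ Int.cast_injective
  rw [hinj key]
  apply Ideal.sum_mem
  intro β _
  exact Ideal.mul_mem_left _ _ (Ideal.subset_span ⟨β, rfl⟩)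

end SKEAux


/-- There is `N_d > 0` such that for every prime `p > N_d`: the reduction
mod `p` of any Keller map over `ℤ` of degree ≤ d with affine part identity is a strong
Keller map over `𝔽_p`. -/
theorem keller_mod_p_is_strong_keller_for_large_p (n d : ℕ) (hn : 1 ≤ n) (hd : 2 ≤ d) :
    ∃ N : ℕ, 0 < N ∧ ∀ p : ℕ, p.Prime → N < p →
      ∀ F : Fin n → MvPolynomial (Fin n) ℤ,
        DegLE F d → AffinePartId F → jacDet F = 1 →
        IsSKE n d (fun i => MvPolynomial.map (Int.castRingHom (ZMod p)) (F i)) := by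
  classical
  obtain ⟨s, hs⟩ := IsNoetherian.noetherian (Jzd n d)
  choose Mx kx hMx hmem using fun x : {y // y ∈ s} =>
    SKEAux.exists_int_multiple x.1 (hs ▸ Ideal.subset_span x.2)
  refine ⟨∏ x ∈ s.attach, (Mx x).natAbs,
    Finset.prod_pos fun x _ => Int.natAbs_pos.mpr (hMx x), ?_⟩
  intro p hp hNp F hdeg haff hjac
  haveI : Fact p.Prime := ⟨hp⟩
  set Fb : Fin n → MvPolynomial (Fin n) (ZMod p) :=
    fun i => MvPolynomial.map (Int.castRingHom (ZMod p)) (F i) with hFb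
  have hhigh : ∀ i β, d < mdeg β → coeff β (Fb i) = 0 := by
    intro i β hβ
    rw [hFb, coeff_map]
    have h0 : coeff β (F i) = 0 := by
      apply coeff_eq_zero_of_totalDegree_lt
      have hm : mdeg β = ∑ j ∈ β.support, β j := rfl
      have := hdeg i
      omega
    rw [h0, map_zero]
  have haffb : AffinePartId Fb := by
    intro i α hα
    rw [hFb]
    simp only [coeff_map]
    rw [haff i α hα, coeff_X', coeff_X', apply_ite (Int.castRingHom (ZMod p)), map_one, map_zero]
  have hjacb : jacDet Fb = 1 := by
    have h := SKEAux.jacDet_map (Int.castRingHom (ZMod p)) F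
    rw [hjac, map_one] at h
    exact h.symm
  have hE : ∀ β, psi d Fb (Ecoef n d β) = 0 := SKEAux.psi_Ecoef Fb hhigh haffb hjacb
  have hker : Ideal.span (Set.range (Ecoef n d)) ≤ RingHom.ker (psi d Fb) := by
    rw [Ideal.span_le]
    rintro _ ⟨β, rfl⟩
    exact hE β
  have hgen : ∀ x ∈ s, psi d Fb x = 0 := by
    intro x hx
    have h1 : psi d Fb (MvPolynomial.C (Mx ⟨x, hx⟩) * x ^ (kx ⟨x, hx⟩ + 1)) = 0 :=
      hker (hmem ⟨x, hx⟩)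
    rw [map_mul, map_pow] at h1
    have hC : psi d Fb (MvPolynomial.C (Mx ⟨x, hx⟩)) = ((Mx ⟨x, hx⟩ : ℤ) : ZMod p) := by
      simp [psi]
    rw [hC] at h1
    have hMp : ((Mx ⟨x, hx⟩ : ℤ) : ZMod p) ≠ 0 := by
      intro h0
      rw [ZMod.intCast_zmod_eq_zero_iff_dvd] at h0
      have hdvd := h0
      have h2 : p ∣ (Mx ⟨x, hx⟩).natAbs := by
        have := Int.natAbs_dvd_natAbs.mpr hdvd
        simpa using this
      have h3 : (Mx ⟨x, hx⟩).natAbs ∣ ∏ x ∈ s.attach, (Mx x).natAbs :=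
        Finset.dvd_prod_of_mem _ (Finset.mem_attach _ ⟨x, hx⟩)
      have h4 : p ∣ ∏ x ∈ s.attach, (Mx x).natAbs := h2.trans h3
      have h5 : p ≤ ∏ x ∈ s.attach, (Mx x).natAbs :=
        Nat.le_of_dvd (Finset.prod_pos fun x _ => Int.natAbs_pos.mpr (hMx x)) h4
      omega
    have h6 : psi d Fb x ^ (kx ⟨x, hx⟩ + 1) = 0 := (mul_eq_zero.mp h1).resolve_left hMp
    exact pow_eq_zero_iff (Nat.succ_ne_zero _) |>.mp h6
  intro Q hQ
  have : Jzd n d ≤ RingHom.ker (psi d Fb) := by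
    rw [← hs, Submodule.span_le]
    intro x hx
    exact hgen x hx
  exact this hQ

end
end

section
/- Fix n ≥ 1, d ≥ 2, and a positive integer C. There exists a positive integer N (depending on n, d, C) such that for every prime p > N the following holds: if F ∈ ME_n(ℤ) has degree ≤ d, affine part identity, every coefficient of F lies in the interval [−C, C], and the coefficientwise reduction F mod p is a strong Keller map over 𝔽_p, then det(Jac(F)) = 1 in ℤ[x_1,…,x_n]. -/
open MvPolynomial

noncomputable section

-- auxiliary lemmas

lemma Ecoef_mem_Jzd (n d : ℕ) (β : Fin n →₀ ℕ) : Ecoef n d β ∈ Jzd n d :=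
  Ideal.le_radical (Ideal.subset_span ⟨β, rfl⟩)

lemma jacDet_map {n : ℕ} {R S : Type*} [CommRing R] [CommRing S] (f : R →+* S)
    (F : Fin n → MvPolynomial (Fin n) R) :
    MvPolynomial.map f (jacDet F) = jacDet (fun i => MvPolynomial.map f (F i)) := by
  unfold jacDet
  rw [RingHom.map_det]
  congr 1
  ext i j
  simp [Matrix.map, pderiv_map]

lemma map_psi_univFZ {n d : ℕ} {R : Type*} [CommRing R] (F : Fin n → MvPolynomial (Fin n) R)
    (hdeg : DegLE F d) (haff : AffinePartId F) (i : Fin n) :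
    MvPolynomial.map (psi d F) (univFZ n d i) = F i := by
  ext β
  rw [univFZ, map_add, map_sum]
  simp only [MvPolynomial.map_X, MvPolynomial.map_monomial]
  rw [coeff_add, coeff_sum]
  have hpsi : ∀ α : {x // x ∈ midxSet n d},
      coeff β ((MvPolynomial.monomial α.1)
        ((psi d F) (MvPolynomial.X (⟨i, ⟨α.1, by
          have h := α.2
          simp only [midxSet, Finset.mem_filter] at h
          exact h.2⟩⟩ : Idx n d)))) = if α.1 = β then coeff α.1 (F i) else 0 := by
    intro α
    rw [coeff_monomial]
    congr 1
    simp [psi]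
  rw [Finset.sum_congr rfl fun α _ => hpsi α]
  rw [Finset.sum_attach (midxSet n d) (fun α => if α = β then coeff α (F i) else 0)]
  rw [Finset.sum_ite_eq' (midxSet n d) β (fun α => coeff α (F i))]
  by_cases hmem : β ∈ midxSet n d
  · have h2 : ¬ mdeg β ≤ 1 := by
      simp only [midxSet, Finset.mem_filter] at hmem
      omega
    rw [if_pos hmem]
    have hXz : coeff β (MvPolynomial.X i : MvPolynomial (Fin n) R) = 0 := by
      rw [coeff_X']
      rw [if_neg]
      intro h
      apply h2
      rw [← h]
      simp [mdeg, Finsupp.sum_single_index]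
    rw [hXz, zero_add]
  · rw [if_neg hmem, add_zero]
    by_cases h1 : mdeg β ≤ 1
    · exact (haff i β h1).symm
    · by_cases hle : mdeg β ≤ d
      · exfalso
        apply hmem
        simp only [midxSet, Finset.mem_filter]
        refine ⟨?_, by omega, hle⟩
        rw [Finset.mem_Iic]
        intro j
        simp only [Finsupp.coe_equivFunOnFinite_symm]
        calc β j ≤ mdeg β := by
              rw [mdeg, Finsupp.sum]
              by_cases hj : j ∈ β.support
              · exact Finset.single_le_sum (fun _ _ => Nat.zero_le _) hj
              · simp [Finsupp.notMem_support_iff.mp hj]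
          _ ≤ d := hle
      · have hz : coeff β (F i) = 0 := by
          by_contra hne
          exact hle (le_trans (MvPolynomial.le_totalDegree (by
            rwa [MvPolynomial.mem_support_iff])) (hdeg i))
        have hXz : coeff β (MvPolynomial.X i : MvPolynomial (Fin n) R) = 0 := by
          rw [coeff_X', if_neg]
          intro h
          apply h1
          rw [← h]
          simp [mdeg, Finsupp.sum_single_index]
        rw [hz, hXz]


lemma good_finite (n d C : ℕ) :
    Set.Finite {F : Fin n → MvPolynomial (Fin n) ℤ |
      DegLE F d ∧ ∀ i α, |MvPolynomial.coeff α (F i)| ≤ (C : ℤ)} := by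
  set T : Finset (Fin n →₀ ℕ) := Finset.Iic (Finsupp.equivFunOnFinite.symm fun _ : Fin n => d)
    with hT
  set S := {F : Fin n → MvPolynomial (Fin n) ℤ |
      DegLE F d ∧ ∀ i α, |MvPolynomial.coeff α (F i)| ≤ (C : ℤ)} with hS
  rw [← Set.finite_coe_iff]
  apply Finite.of_injective (fun (F : ↥S) (i : Fin n) (t : {x // x ∈ T}) =>
    (⟨coeff t.1 (F.1 i), abs_le.mp (F.2.2 i t.1)⟩ : Set.Icc (-(C:ℤ)) C))
  intro F G h
  have key : ∀ (i : Fin n) (β : Fin n →₀ ℕ), β ∉ T → ∀ (H : Fin n → MvPolynomial (Fin n) ℤ),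
      DegLE H d → coeff β (H i) = 0 := by
    intro i β hβ H hH
    by_contra hne
    apply hβ
    rw [hT, Finset.mem_Iic]
    intro j
    simp only [Finsupp.coe_equivFunOnFinite_symm]
    have h1 : β j ≤ β.sum fun _ e => e := by
      rw [Finsupp.sum]
      by_cases hj : j ∈ β.support
      · exact Finset.single_le_sum (fun _ _ => Nat.zero_le _) hj
      · simp [Finsupp.notMem_support_iff.mp hj]
    exact le_trans h1 (le_trans (MvPolynomial.le_totalDegree (by
      rwa [MvPolynomial.mem_support_iff])) (hH i))
  apply Subtype.ext
  funext i
  apply MvPolynomial.ext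
  intro β
  by_cases hβ : β ∈ T
  · have := congrFun (congrFun h i) ⟨β, hβ⟩
    exact Subtype.ext_iff.mp this
  · rw [key i β hβ F.1 F.2.1, key i β hβ G.1 G.2.1]


/-- For fixed `n`, `d` and coefficient bound `C`, there is `N > 0` such
that for every prime `p > N`: if `F ∈ ME_n(ℤ)` has degree ≤ d, affine part identity and
all coefficients in `[−C, C]`, and `F mod p` is a strong Keller map over `𝔽_p`, then
`det(Jac(F)) = 1` in `ℤ[x_1,…,x_n]`. -/
theorem bounded_strong_keller_mod_p_is_keller (n d C : ℕ) (hn : 1 ≤ n) (hd : 2 ≤ d)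
    (hC : 0 < C) :
    ∃ N : ℕ, 0 < N ∧ ∀ p : ℕ, p.Prime → N < p →
      ∀ F : Fin n → MvPolynomial (Fin n) ℤ,
        DegLE F d → AffinePartId F →
        (∀ (i : Fin n) (α : Fin n →₀ ℕ), |MvPolynomial.coeff α (F i)| ≤ (C : ℤ)) →
        IsSKE n d (fun i => MvPolynomial.map (Int.castRingHom (ZMod p)) (F i)) →
        jacDet F = 1 := by
  have hfin := good_finite n d C
  set V : Finset (MvPolynomial (Fin n) ℤ) :=
    (hfin.image fun F => jacDet F - 1).toFinset with hV
  set N : ℕ := 1 + V.sup (fun Q => Q.support.sup fun β => (coeff β Q).natAbs) with hN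
  refine ⟨N, by omega, ?_⟩
  intro p hp hNp F hdeg haff hbd hske
  set f : ℤ →+* ZMod p := Int.castRingHom (ZMod p) with hf
  set Fp : Fin n → MvPolynomial (Fin n) (ZMod p) := fun i => MvPolynomial.map f (F i) with hFp
  have hdegp : DegLE Fp d := by
    intro i
    refine le_trans ?_ (hdeg i)
    rw [MvPolynomial.totalDegree]
    apply Finset.sup_le
    intro β hβ
    apply MvPolynomial.le_totalDegree
    rw [MvPolynomial.mem_support_iff] at hβ ⊢
    intro h
    apply hβ
    rw [hFp, coeff_map, h, map_zero]
  have haffp : AffinePartId Fp := by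
    intro i α hα
    rw [hFp]
    simp only [coeff_map]
    rw [haff i α hα, ← MvPolynomial.map_X (f := f), coeff_map]
  -- F mod p has jacDet = 1
  have hjp : jacDet Fp = 1 := by
    have key : ∀ β, coeff β (jacDet Fp - 1) = 0 := by
      intro β
      have h1 := hske (Ecoef n d β) (Ecoef_mem_Jzd n d β)
      rw [Ecoef] at h1
      rw [← coeff_map] at h1
      rw [map_sub, map_one, jacDet_map] at h1
      have h2 : (fun i => MvPolynomial.map (psi d Fp) (univFZ n d i)) = Fp := by
        funext i; exact map_psi_univFZ Fp hdegp haffp i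
      rwa [h2] at h1
    have : jacDet Fp - 1 = 0 := by
      apply MvPolynomial.ext; intro β; rw [key β, coeff_zero]
    exact sub_eq_zero.mp this
  have hmapped : MvPolynomial.map f (jacDet F) = 1 := by
    rw [jacDet_map]; exact hjp
  -- conclude over ℤ
  have hmem : jacDet F - 1 ∈ V := by
    rw [hV, Set.Finite.mem_toFinset]
    exact ⟨F, ⟨hdeg, hbd⟩, rfl⟩
  have : jacDet F - 1 = 0 := by
    apply MvPolynomial.ext
    intro β
    rw [coeff_zero]
    by_contra hne
    have hsupp : β ∈ (jacDet F - 1).support := by rwa [MvPolynomial.mem_support_iff]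
    have hle : (coeff β (jacDet F - 1)).natAbs ≤
        V.sup (fun Q => Q.support.sup fun β => (coeff β Q).natAbs) :=
      le_trans (Finset.le_sup (f := fun β => (coeff β (jacDet F - 1)).natAbs) hsupp)
        (Finset.le_sup (f := fun Q => Q.support.sup fun β => (coeff β Q).natAbs) hmem)
    have hdvd : (p : ℤ) ∣ coeff β (jacDet F - 1) := by
      rw [← ZMod.intCast_zmod_eq_zero_iff_dvd]
      have : coeff β (MvPolynomial.map f (jacDet F - 1)) = 0 := by
        rw [map_sub, map_one, hmapped, sub_self, coeff_zero]
      rwa [coeff_map] at this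
    have hge : (p : ℤ) ≤ |coeff β (jacDet F - 1)| :=
      Int.le_of_dvd (abs_pos.mpr hne) ((dvd_abs _ _).mpr hdvd)
    rw [Int.abs_eq_natAbs] at hge
    have : p ≤ (coeff β (jacDet F - 1)).natAbs := by exact_mod_cast hge
    omega
  exact sub_eq_zero.mp this


end
end
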